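/- arXiv:2510.12708 — 12 statements merged into one kernel-verified Lean document; each statement's English description precedes it below -/
import Mathlib

section
/- Let d be an odd positive integer. Then for every integer i ≥ 1, every weighted-homogeneous polynomial of weighted degree i·d in R lies in the k-subalgebra of R generated by the set of all monomials of weighted degree d together with the element y^d. -/
/-!
Induct on `i`. A monomial of weighted degree `(i + 1) d` that involves some `x_j` has a divisor of
weighted degree exactly `d`: grow a divisor one degree at a time, adding an `x` while one is left
over and otherwise trading an `x` of the divisor for a left-over `y`. The quotient has weighted
degree `i d`. A monomial without `x`'s is `y ^ b` with `2 b = (i + 1) d`; as `d` is odd, `d ∣ b`,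
so it is a power of `y ^ d`.
-/

open MvPolynomial

/-- The weighted degree of an exponent vector on the variables of
`R = k[x_0, …, x_{n-1}, y]`, where each `x_j` has degree 1 and `y` has degree 2. -/
def degw (n : ℕ) (σ : (Fin n ⊕ Unit) →₀ ℕ) : ℕ :=
  (∑ j : Fin n, σ (Sum.inl j)) + 2 * σ (Sum.inr ())

def monoSet (k : Type*) [CommSemiring k] (n d : ℕ) : Set (MvPolynomial (Fin n ⊕ Unit) k) :=
  {p | ∃ σ : (Fin n ⊕ Unit) →₀ ℕ, p = monomial σ (1 : k) ∧ degw n σ = d}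

namespace WeightedVeronese

variable {n : ℕ}

lemma le_iff_inl_inr {σ τ : (Fin n ⊕ Unit) →₀ ℕ} :
    τ ≤ σ ↔ (∀ j, τ (Sum.inl j) ≤ σ (Sum.inl j)) ∧ τ (Sum.inr ()) ≤ σ (Sum.inr ()) := by
  simp [Finsupp.le_def, Sum.forall, Unique.forall_iff]

lemma degw_add (σ τ : (Fin n ⊕ Unit) →₀ ℕ) : degw n (σ + τ) = degw n σ + degw n τ := by
  simp only [degw, Finsupp.add_apply, Finset.sum_add_distrib]
  ring

lemma degw_single_inl (j : Fin n) : degw n (Finsupp.single (Sum.inl j) 1) = 1 := by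
  simp [degw, Finsupp.single_apply]

lemma degw_single_inr : degw n (Finsupp.single (Sum.inr ()) 1) = 2 := by
  simp [degw]

lemma eq_zero_of_degw_eq_zero {σ : (Fin n ⊕ Unit) →₀ ℕ} (hσ : degw n σ = 0) : σ = 0 := by
  simp only [degw, Nat.add_eq_zero_iff, Finset.sum_eq_zero_iff, Finset.mem_univ, true_implies,
    mul_eq_zero, OfNat.ofNat_ne_zero, false_or] at hσ
  ext (j | ⟨⟨⟩⟩)
  · exact hσ.1 j
  · exact hσ.2

lemma eq_single_inr_of_forall_inl_eq_zero {σ : (Fin n ⊕ Unit) →₀ ℕ}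
    (hσ : ∀ j, σ (Sum.inl j) = 0) : σ = Finsupp.single (Sum.inr ()) (σ (Sum.inr ())) := by
  ext (j | ⟨⟨⟩⟩) <;> simp [hσ]

lemma exists_le_degw_eq_succ {σ τ : (Fin n ⊕ Unit) →₀ ℕ} (hσ : ∃ j, σ (Sum.inl j) ≠ 0)
    (hτσ : τ ≤ σ) (hlt : degw n τ < degw n σ) : ∃ τ' ≤ σ, degw n τ' = degw n τ + 1 := by
  by_cases hfree : ∃ j, τ (Sum.inl j) < σ (Sum.inl j)
  · obtain ⟨j, hj⟩ := hfree
    refine ⟨τ + Finsupp.single (Sum.inl j) 1, ?_, by rw [degw_add, degw_single_inl]⟩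
    rw [le_iff_inl_inr] at hτσ ⊢
    refine ⟨fun j' => ?_, by simpa using hτσ.2⟩
    rcases eq_or_ne j' j with rfl | hj'
    · simpa using hj
    · simpa [Ne.symm hj'] using hτσ.1 j'
  · push Not at hfree
    have hx : ∀ j, τ (Sum.inl j) = σ (Sum.inl j) := fun j => le_antisymm (hτσ _) (hfree j)
    have hy : τ (Sum.inr ()) < σ (Sum.inr ()) := by
      simp only [degw, hx] at hlt
      omega
    obtain ⟨j, hj⟩ := hσ
    have hxj : Finsupp.single (Sum.inl j) 1 ≤ τ := by
      rw [le_iff_inl_inr]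
      refine ⟨fun j' => ?_, by simp⟩
      rcases eq_or_ne j' j with rfl | hj'
      · simpa [hx] using Nat.one_le_iff_ne_zero.mpr hj
      · simp [Ne.symm hj']
    obtain ⟨τ₀, rfl⟩ := exists_add_of_le hxj
    refine ⟨Finsupp.single (Sum.inr ()) 1 + τ₀, ?_, ?_⟩
    · rw [le_iff_inl_inr] at hτσ ⊢
      refine ⟨fun j' => le_trans (by simp) (hτσ.1 j'), ?_⟩
      simp at hy ⊢
      omega
    · simp only [degw_add, degw_single_inl, degw_single_inr]
      omega

lemma exists_le_degw_eq {σ : (Fin n ⊕ Unit) →₀ ℕ} (hσ : ∃ j, σ (Sum.inl j) ≠ 0) {m : ℕ}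
    (hm : m ≤ degw n σ) : ∃ τ ≤ σ, degw n τ = m := by
  induction m with
  | zero => exact ⟨0, zero_le, by simp [degw]⟩
  | succ m ih =>
    obtain ⟨τ, hτσ, rfl⟩ := ih (by omega)
    exact exists_le_degw_eq_succ hσ hτσ (by omega)

variable {k : Type*} [CommSemiring k] {d : ℕ}

lemma monomial_single_inr_mem_adjoin (hd : Odd d) {b i : ℕ} (hb : 2 * b = i * d) :
    monomial (Finsupp.single (Sum.inr ()) b) (1 : k) ∈
      Algebra.adjoin k
        (monoSet k n d ∪ {(X (Sum.inr ()) : MvPolynomial (Fin n ⊕ Unit) k) ^ d}) := by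
  have hdb : d ∣ 2 * b := hb ▸ dvd_mul_left d i
  obtain ⟨q, rfl⟩ := (Odd.coprime_two_right hd).dvd_of_dvd_mul_left hdb
  rw [← X_pow_eq_monomial, pow_mul]
  exact Subalgebra.pow_mem _
    (Algebra.subset_adjoin (Set.mem_union_right _ (Set.mem_singleton _))) q

lemma monomial_mem_adjoin (hd : Odd d) (i : ℕ) {σ : (Fin n ⊕ Unit) →₀ ℕ}
    (hσ : degw n σ = i * d) :
    monomial σ (1 : k) ∈
      Algebra.adjoin k
        (monoSet k n d ∪ {(X (Sum.inr ()) : MvPolynomial (Fin n ⊕ Unit) k) ^ d}) := by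
  induction i generalizing σ with
  | zero =>
    rw [eq_zero_of_degw_eq_zero (σ := σ) (by rw [hσ, zero_mul]), ← C_apply, C_1]
    exact Subalgebra.one_mem _
  | succ i ih =>
    by_cases hx : ∃ j, σ (Sum.inl j) ≠ 0
    · obtain ⟨τ, hτσ, hτ⟩ :=
        exists_le_degw_eq hx (m := d) (hσ ▸ Nat.le_mul_of_pos_left d i.succ_pos)
      obtain ⟨ρ, rfl⟩ := exists_add_of_le hτσ
      rw [degw_add, hτ, Nat.succ_mul, Nat.add_comm] at hσ
      rw [← one_mul (1 : k), ← monomial_mul]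
      exact mul_mem (Algebra.subset_adjoin (Or.inl ⟨τ, rfl, hτ⟩)) (ih (by omega))
    · push Not at hx
      rw [eq_single_inr_of_forall_inl_eq_zero hx] at hσ ⊢
      exact monomial_single_inr_mem_adjoin hd (by simpa [degw] using hσ)

end WeightedVeronese

open WeightedVeronese in
theorem stmt_1_general (k : Type*) [Field k] (n : ℕ) (d : ℕ)
    (hd : Odd d) (i : ℕ) (p : MvPolynomial (Fin n ⊕ Unit) k)
    (hp : ∀ σ ∈ p.support, degw n σ = i * d) :
    p ∈ Algebra.adjoin k
      (monoSet k n d ∪ {(X (Sum.inr ()) : MvPolynomial (Fin n ⊕ Unit) k) ^ d}) := by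
  rw [p.as_sum]
  refine Subalgebra.sum_mem _ fun σ hσ => ?_
  rw [← mul_one (coeff σ p), ← smul_eq_mul, ← smul_monomial]
  exact Subalgebra.smul_mem _ (monomial_mem_adjoin hd i (hp σ hσ)) _

/-- Let `d` be an odd positive integer. Then for every `i ≥ 1`, every
weighted-homogeneous polynomial of weighted degree `i * d` in `R = k[x_0, …, x_{n-1}, y]`
(with `deg x_j = 1`, `deg y = 2`) lies in the `k`-subalgebra generated by the monomials of
weighted degree `d` together with `y ^ d`. -/
theorem stmt_1 (k : Type*) [Field k] (n : ℕ) (hn : 1 ≤ n) (d : ℕ) (hdpos : 0 < d)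
    (hd : Odd d) (i : ℕ) (hi : 1 ≤ i) (p : MvPolynomial (Fin n ⊕ Unit) k)
    (hp : ∀ σ ∈ p.support, degw n σ = i * d) :
    p ∈ Algebra.adjoin k
      (monoSet k n d ∪ {(X (Sum.inr ()) : MvPolynomial (Fin n ⊕ Unit) k) ^ d}) :=
  stmt_1_general k n d hd i p hp
end

section
/- Let d be an odd positive integer. Then y^d does not lie in the k-subalgebra of R generated by the set of all monomials of weighted degree d. In particular, y^d is a required generator of the d-th Veronese subring R^{(d)} of weighted degree 2d. -/
open MvPolynomial

/-- Let `d` be an odd positive integer. Then `y ^ d` does not lie in the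
`k`-subalgebra of `R = k[x_0, …, x_{n-1}, y]` (with `deg x_j = 1`, `deg y = 2`) generated by
the monomials of weighted degree `d`. -/
theorem stmt_2 (k : Type*) [Field k] (n : ℕ) (hn : 1 ≤ n) (d : ℕ) (hdpos : 0 < d)
    (hd : Odd d) :
    (X (Sum.inr ()) : MvPolynomial (Fin n ⊕ Unit) k) ^ d ∉
      Algebra.adjoin k (monoSet k n d) := by
  intro hmem
  -- evaluation: x_j ↦ 0, y ↦ X in k[X]
  set f : (Fin n ⊕ Unit) → Polynomial k :=
    Sum.elim (fun _ => 0) (fun _ => Polynomial.X) with hf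
  set φ : MvPolynomial (Fin n ⊕ Unit) k →ₐ[k] Polynomial k := aeval f with hφ
  -- every generator maps to 0
  have hgen : ∀ p ∈ monoSet k n d, φ p = 0 := by
    rintro p ⟨σ, rfl, hσ⟩
    -- σ has a positive x-exponent since d is odd
    have hx : ∃ j : Fin n, σ (Sum.inl j) ≠ 0 := by
      by_contra h
      push_neg at h
      have : degw n σ = 2 * σ (Sum.inr ()) := by
        simp [degw, h]
      rw [hσ] at this
      exact (Nat.not_even_iff_odd.mpr hd) ⟨σ (Sum.inr ()), by omega⟩
    obtain ⟨j, hj⟩ := hx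
    have hjs : Sum.inl j ∈ σ.support := Finsupp.mem_support_iff.mpr hj
    rw [hφ, aeval_monomial]
    have : (σ.prod fun i e => f i ^ e) = 0 := by
      apply Finset.prod_eq_zero hjs
      simp [hf, zero_pow hj]
    rw [this, mul_zero]
  -- hence the image of the adjoin is ⊥
  have him : φ ((X (Sum.inr ()) : MvPolynomial (Fin n ⊕ Unit) k) ^ d) ∈
      Algebra.adjoin k (φ '' (monoSet k n d)) := by
    rw [← AlgHom.map_adjoin]
    exact Subalgebra.mem_map.mpr ⟨_, hmem, rfl⟩
  have hbot : Algebra.adjoin k (φ '' (monoSet k n d)) ≤ ⊥ := by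
    apply Algebra.adjoin_le
    rintro q ⟨p, hp, rfl⟩
    rw [hgen p hp]
    exact Subalgebra.zero_mem _
  have := hbot him
  rw [Algebra.mem_bot] at this
  obtain ⟨c, hc⟩ := this
  have hXd : φ ((X (Sum.inr ()) : MvPolynomial (Fin n ⊕ Unit) k) ^ d)
      = Polynomial.X ^ d := by
    rw [hφ, map_pow, aeval_X]
    simp [hf]
  rw [hXd] at hc
  have h1 : (Polynomial.X ^ d : Polynomial k).natDegree = d := by
    simp
  have h2 : (algebraMap k (Polynomial k) c).natDegree = 0 := Polynomial.natDegree_C c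
  rw [hc, h1] at h2
  omega
end

section
/- Let d be an even positive integer. Then for every integer i ≥ 1, every weighted-homogeneous polynomial of weighted degree i·d in R lies in the k-subalgebra of R generated by the set of all monomials of weighted degree d. In particular, the d-th Veronese subring R^{(d)} is generated in degree d when d is even. -/
/-!
Write a monomial of weighted degree `i * d` as `x^α y^b` with `|α| + 2b = i * d`. As `d` is even, so
are `i * d` and `|α|`, and a factor of weighted degree exactly `d` can be split off: take `d` of the `x`'s if
`|α| ≥ d`, and otherwise all of `x^α` together with `y^((d - |α|)/2)`. The cofactor has weighted
degree `(i - 1) * d`, so induction on `i` writes every such monomial as a product of monomials of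
weighted degree `d`.
-/

open MvPolynomial

open Finsupp

section WeightedDegree

variable {n : ℕ}

lemma degw_add (σ τ : (Fin n ⊕ Unit) →₀ ℕ) : degw n (σ + τ) = degw n σ + degw n τ := by
  simp only [degw, Finsupp.add_apply, Finset.sum_add_distrib]
  ring

lemma degw_eq_degree_add (σ : (Fin n ⊕ Unit) →₀ ℕ) :
    degw n σ = σ.degree + σ (Sum.inr ()) := by
  simp only [degw, degree_eq_sum, Fintype.sum_sum_type, Finset.univ_unique,
    Finset.sum_singleton, PUnit.default_eq_unit]
  ring

lemma degw_update_inr (σ : (Fin n ⊕ Unit) →₀ ℕ) (c : ℕ) :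
    degw n (σ.update (Sum.inr ()) c) = (∑ j, σ (Sum.inl j)) + 2 * c := by
  simp [degw, update_apply]

lemma update_inr_le {σ : (Fin n ⊕ Unit) →₀ ℕ} {c : ℕ} (hc : c ≤ σ (Sum.inr ())) :
    σ.update (Sum.inr ()) c ≤ σ := by
  intro x
  rcases x with j | ⟨⟩ <;> simp [update_apply, hc]

lemma exists_le_degw_eq {d : ℕ} (hd : Even d) {σ : (Fin n ⊕ Unit) →₀ ℕ}
    (hσ : Even (degw n σ)) (hdσ : d ≤ degw n σ) : ∃ τ ≤ σ, degw n τ = d := by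
  set a := ∑ j, σ (Sum.inl j)
  have hσ_eq : degw n σ = a + 2 * σ (Sum.inr ()) := rfl
  by_cases had : d ≤ a
  · have hdeg : (σ.update (Sum.inr ()) 0).degree = a := by
      simpa using (degw_eq_degree_add (σ.update (Sum.inr ()) 0)).symm.trans
        (degw_update_inr σ 0)
    obtain ⟨τ, hτ, rfl⟩ := exists_le_degree_eq _ d (hdeg ▸ had)
    have hτ_inr : τ (Sum.inr ()) = 0 := by simpa using hτ (Sum.inr ())
    exact ⟨τ, hτ.trans (update_inr_le (Nat.zero_le _)), by rw [degw_eq_degree_add, hτ_inr, add_zero]⟩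
  · -- `a` is even because `degw n σ` is, so `d - a` is twice the number of `y`'s to take
    obtain ⟨c, hc⟩ : ∃ c, d = a + 2 * c := ⟨(d - a) / 2, by grind⟩
    exact ⟨σ.update (Sum.inr ()) c, update_inr_le (by omega), by rw [degw_update_inr, hc]⟩

end WeightedDegree

lemma monomial_mem_adjoin_monoSet (k : Type*) [CommSemiring k] {n d : ℕ} (hd : Even d) (i : ℕ)
    {σ : (Fin n ⊕ Unit) →₀ ℕ} (hσ : degw n σ = i * d) :
    monomial σ (1 : k) ∈ Algebra.adjoin k (monoSet k n d) := by
  induction i generalizing σ with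
  | zero =>
    obtain rfl : σ = 0 := by
      rw [zero_mul, degw_eq_degree_add] at hσ
      exact (degree_eq_zero_iff σ).mp (by omega)
    exact Subalgebra.one_mem _
  | succ i ih =>
    have hσ' : degw n σ = d + i * d := by rw [hσ]; ring
    obtain ⟨τ, hτσ, hτ⟩ := exists_le_degw_eq hd (hσ ▸ hd.mul_left _) (by omega)
    have hrest : degw n (σ - τ) = i * d := by
      have := degw_add τ (σ - τ)
      rw [add_tsub_cancel_of_le hτσ] at this
      omega
    rw [← add_tsub_cancel_of_le hτσ, ← one_mul (1 : k), ← monomial_mul]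
    exact mul_mem (Algebra.subset_adjoin ⟨τ, rfl, hτ⟩) (ih hrest)

theorem stmt_3_general (k : Type*) [Field k] (n : ℕ) (d : ℕ)
    (hd : Even d) (i : ℕ) (p : MvPolynomial (Fin n ⊕ Unit) k)
    (hp : ∀ σ ∈ p.support, degw n σ = i * d) :
    p ∈ Algebra.adjoin k (monoSet k n d) := by
  rw [← p.support_sum_monomial_coeff]
  refine Subalgebra.sum_mem _ fun σ hσ => ?_
  rw [← mul_one (coeff σ p), ← C_mul_monomial]
  exact mul_mem (Subalgebra.algebraMap_mem _ _) (monomial_mem_adjoin_monoSet k hd i (hp σ hσ))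

/-- Let `d` be an even positive integer. Then for every `i ≥ 1`, every
weighted-homogeneous polynomial of weighted degree `i * d` in `R = k[x_0, …, x_{n-1}, y]`
(with `deg x_j = 1`, `deg y = 2`) lies in the `k`-subalgebra generated by the monomials of
weighted degree `d`. -/
theorem stmt_3 (k : Type*) [Field k] (n : ℕ) (hn : 1 ≤ n) (d : ℕ) (hdpos : 0 < d)
    (hd : Even d) (i : ℕ) (hi : 1 ≤ i) (p : MvPolynomial (Fin n ⊕ Unit) k)
    (hp : ∀ σ ∈ p.support, degw n σ = i * d) :
    p ∈ Algebra.adjoin k (monoSet k n d) :=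
  stmt_3_general k n d hd i p hp
end

section
/- Let q ≥ 2 be an integer and let d be an odd integer with d ≥ q + 1. Then the number of pairs (a, b), where a : Fin (q−1) → ℕ and b ∈ ℕ satisfy a_0 + ⋯ + a_{q−2} + 2b = d, a_j ≤ d − 1 for all 0 ≤ j ≤ q − 3, a_{q−2} ≤ q, and b ≤ d − 1, equals ∑_{c=0}^{(d−1)/2} C(d − 2c + q − 2, q − 2) − ∑_{c=0}^{⌊(d−q−1)/2⌋} C(d − 2c − 3, q − 2) − (q − 2). -/
open Finset

lemma hockey (k n : ℕ) : ∑ i ∈ range (n+1), (i+k).choose k = (n+k+1).choose (k+1) := by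
  induction n with
  | zero => simp
  | succ n ih =>
    rw [Finset.sum_range_succ, ih]
    have e : n+1+k = n+k+1 := by ring
    rw [e]
    have : (n+k+1+1).choose (k+1) = (n+k+1).choose k + (n+k+1).choose (k+1) := by
      rw [Nat.choose_succ_succ]
    omega

lemma tuple_decomp (k n : ℕ) :
    Finset.Nat.antidiagonalTuple (k+1) n =
      (Finset.range (n+1)).biUnion
        (fun j => (Finset.Nat.antidiagonalTuple k (n-j)).image
          (fun x : Fin k → ℕ => Fin.cons (α := fun _ => ℕ) j x)) := by
  ext x
  simp only [Finset.mem_biUnion, Finset.mem_range, Finset.mem_image,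
    Finset.Nat.mem_antidiagonalTuple]
  constructor
  · intro h
    have h0 : x 0 ≤ n := by
      rw [Fin.sum_univ_succ] at h; omega
    refine ⟨x 0, by omega, Fin.tail x, ?_, Fin.cons_self_tail x⟩
    rw [Fin.sum_univ_succ] at h
    simp only [Fin.tail]
    omega
  · rintro ⟨j, hj, y, hy, rfl⟩
    rw [Fin.sum_cons, hy]
    omega

lemma card_tuple (k n : ℕ) :
    (Finset.Nat.antidiagonalTuple (k+1) n).card = (n + k).choose k := by
  induction k generalizing n with
  | zero => simp
  | succ k ih =>
    rw [tuple_decomp]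
    rw [Finset.card_biUnion]
    · have hc : ∀ j ∈ Finset.range (n+1),
          ((Finset.Nat.antidiagonalTuple (k+1) (n-j)).image
            (fun x : Fin (k+1) → ℕ => Fin.cons (α := fun _ => ℕ) j x)).card
            = ((n-j) + k).choose k := by
        intro j _
        rw [Finset.card_image_of_injective _
          (Fin.cons_right_injective (α := fun _ : Fin (k+2) => ℕ) j), ih]
      rw [Finset.sum_congr rfl hc]
      have hr := Finset.sum_range_reflect (fun j => (j + k).choose k) (n+1)
      simp only [Nat.add_sub_cancel] at hr
      rw [hr, hockey, show n+k+1 = n+(k+1) by ring]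
    · intro j1 h1 j2 h2 hne
      simp only [Finset.disjoint_left, Finset.mem_image]
      rintro a ⟨x, _, rfl⟩ ⟨y, _, h⟩
      apply hne
      have := congrFun h 0
      simpa using this.symm

def Pset (k n : ℕ) : Finset ((Fin k → ℕ) × ℕ) :=
  (Finset.range (n/2+1)).biUnion fun c =>
    (Finset.Nat.antidiagonalTuple k (n - 2*c)).image fun a => (a, c)

lemma mem_Pset {k n : ℕ} {p : (Fin k → ℕ) × ℕ} :
    p ∈ Pset k n ↔ (∑ i, p.1 i) + 2 * p.2 = n := by
  simp only [Pset, Finset.mem_biUnion, Finset.mem_range, Finset.mem_image,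
    Finset.Nat.mem_antidiagonalTuple, Prod.ext_iff]
  constructor
  · rintro ⟨c, hc, a, ha, rfl, rfl⟩
    omega
  · intro h
    exact ⟨p.2, by omega, p.1, by omega, rfl, rfl⟩

lemma card_Pset (k n : ℕ) :
    (Pset (k+1) n).card = ∑ c ∈ Finset.range (n/2+1), ((n - 2*c) + k).choose k := by
  rw [Pset, Finset.card_biUnion]
  · refine Finset.sum_congr rfl fun c _ => ?_
    rw [Finset.card_image_of_injective _ (fun a b h => (Prod.ext_iff.mp h).1), card_tuple]
  · intro c1 h1 c2 h2 hne
    simp only [Finset.disjoint_left, Finset.mem_image]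
    rintro p ⟨x, _, rfl⟩ ⟨y, _, h⟩
    exact hne ((Prod.ext_iff.mp h).2.symm)

lemma card_Pset' (k n : ℕ) (hk : 1 ≤ k) :
    (Pset k n).card = ∑ c ∈ Finset.range (n/2+1), ((n - 2*c) + (k-1)).choose (k-1) := by
  obtain ⟨j, rfl⟩ : ∃ j, k = j + 1 := ⟨k - 1, by omega⟩
  simpa using card_Pset j n

/-- For `q ≥ 2` and odd `d ≥ q + 1`, the number of pairs `(a, b)` with
`a : Fin (q-1) → ℕ`, `b : ℕ`, `a 0 + ⋯ + a (q-2) + 2b = d`, `a j ≤ d - 1` for `0 ≤ j ≤ q - 3`,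
`a (q-2) ≤ q`, and `b ≤ d - 1`, equals
`∑_{c=0}^{(d-1)/2} C(d - 2c + q - 2, q - 2) - ∑_{c=0}^{⌊(d-q-1)/2⌋} C(d - 2c - 3, q - 2) - (q - 2)`. -/
theorem stmt_5 (q d : ℕ) (hq : 2 ≤ q) (hd : Odd d) (hdq : q + 1 ≤ d) :
    (Set.ncard {p : (Fin (q - 1) → ℕ) × ℕ |
        (∑ j, p.1 j) + 2 * p.2 = d ∧
        (∀ j : Fin (q - 1), ((j : ℕ) < q - 2 → p.1 j ≤ d - 1) ∧ ((j : ℕ) = q - 2 → p.1 j ≤ q)) ∧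
        p.2 ≤ d - 1} : ℤ) =
      (∑ c ∈ Finset.range ((d - 1) / 2 + 1), ((d - 2 * c + q - 2).choose (q - 2) : ℤ))
        - (∑ c ∈ Finset.range ((d - q - 1) / 2 + 1), ((d - 2 * c - 3).choose (q - 2) : ℤ))
        - ((q : ℤ) - 2) := by
  classical
  have hd3 : 3 ≤ d := by omega
  set L : Fin (q - 1) := ⟨q - 2, by omega⟩ with hLdef
  set S := Pset (q - 1) d with hS
  set B := S.filter (fun p => q + 1 ≤ p.1 L) with hB
  set V := S.filter (fun p => ∃ j : Fin (q - 1), (j : ℕ) < q - 2 ∧ p.1 j = d) with hV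
  -- the set equals the coercion of S \ (B ∪ V)
  have hset : {p : (Fin (q - 1) → ℕ) × ℕ |
        (∑ j, p.1 j) + 2 * p.2 = d ∧
        (∀ j : Fin (q - 1), ((j : ℕ) < q - 2 → p.1 j ≤ d - 1) ∧ ((j : ℕ) = q - 2 → p.1 j ≤ q)) ∧
        p.2 ≤ d - 1} = ↑(S \ (B ∪ V)) := by
    ext p
    simp only [Set.mem_setOf_eq, Finset.coe_sdiff, Set.mem_diff, Finset.mem_coe,
      Finset.mem_sdiff, Finset.mem_union, hB, hV, Finset.mem_filter, hS, mem_Pset]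
    constructor
    · rintro ⟨h1, h2, h3⟩
      refine ⟨h1, ?_⟩
      rintro (⟨-, hBp⟩ | ⟨-, j, hj, hjd⟩)
      · have := (h2 L).2 rfl
        omega
      · have := (h2 j).1 hj
        omega
    · rintro ⟨h1, h2⟩
      refine ⟨h1, fun j => ⟨?_, ?_⟩, by omega⟩
      · intro hj
        have hle : p.1 j ≤ ∑ i, p.1 i :=
          Finset.single_le_sum (fun i _ => Nat.zero_le _) (Finset.mem_univ j)
        have hne : p.1 j ≠ d := fun hjd => h2 (Or.inr ⟨h1, j, hj, hjd⟩)
        omega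
      · intro hj
        have hjL : j = L := Fin.ext hj
        have hnq : ¬ (q + 1 ≤ p.1 L) := fun hc => h2 (Or.inl ⟨h1, hc⟩)
        rw [hjL]
        omega
  have hsub : B ∪ V ⊆ S :=
    Finset.union_subset (Finset.filter_subset _ _) (Finset.filter_subset _ _)
  have hdisj : Disjoint B V := by
    rw [Finset.disjoint_left]
    intro p hpB hpV
    rw [hB, Finset.mem_filter, hS, mem_Pset] at hpB
    rw [hV, Finset.mem_filter] at hpV
    obtain ⟨-, j, hj, hjd⟩ := hpV
    have hne : j ≠ L := by
      intro h
      rw [h] at hj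
      simp only [hLdef] at hj
      omega
    have hpair : p.1 j + p.1 L ≤ ∑ i, p.1 i := by
      have hsub' := Finset.sum_le_sum_of_subset
        (Finset.subset_univ ({j, L} : Finset (Fin (q - 1)))) (f := p.1)
      rwa [Finset.sum_pair hne] at hsub'
    omega
  -- cardinality of V
  have hVcard : V.card = q - 2 := by
    have hVeq : V = (Finset.univ.filter (fun j : Fin (q - 1) => (j : ℕ) < q - 2)).image
        (fun j => (fun i => if i = j then d else 0, 0)) := by
      ext p
      rw [hV, Finset.mem_filter, hS, mem_Pset]
      simp only [Finset.mem_image, Finset.mem_filter, Finset.mem_univ, true_and]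
      constructor
      · rintro ⟨h1, j, hj, hjd⟩
        refine ⟨j, hj, ?_⟩
        have hsum : p.1 j + ∑ i ∈ Finset.univ.erase j, p.1 i = ∑ i, p.1 i :=
          Finset.add_sum_erase _ _ (Finset.mem_univ j)
        have hz : ∀ i ∈ Finset.univ.erase j, p.1 i = 0 := by
          rw [← Finset.sum_eq_zero_iff]
          omega
        have hp2 : p.2 = 0 := by omega
        refine Prod.ext ?_ hp2.symm
        funext i
        by_cases hij : i = j
        · subst hij; simp [hjd]
        · simp only [hij, if_false]
          exact (hz i (Finset.mem_erase.mpr ⟨hij, Finset.mem_univ i⟩)).symm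
      · rintro ⟨j, hj, rfl⟩
        refine ⟨?_, j, hj, by simp⟩
        simp [Finset.sum_ite_eq']
    rw [hVeq, Finset.card_image_of_injOn]
    · have hfe : Finset.univ.filter (fun j : Fin (q - 1) => (j : ℕ) < q - 2)
          = Finset.univ.erase L := by
        ext j
        simp only [Finset.mem_filter, Finset.mem_univ, true_and, Finset.mem_erase, and_true]
        constructor
        · intro h hL'
          rw [hL'] at h
          simp only [hLdef] at h
          omega
        · intro h
          have hlt := j.isLt
          have : (j : ℕ) ≠ q - 2 := fun hc => h (Fin.ext hc)
          omega
      rw [hfe, Finset.card_erase_of_mem (Finset.mem_univ L), Finset.card_univ,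
        Fintype.card_fin]
      omega
    · intro j1 h1 j2 h2 h
      have := congrFun (congrArg Prod.fst h) j1
      by_contra hne
      simp [hne] at this
      omega
  -- cardinality of B
  have hBcard : B.card = (Pset (q - 1) (d - (q + 1))).card := by
    have hBeq : B = (Pset (q - 1) (d - (q + 1))).image
        (fun p : (Fin (q - 1) → ℕ) × ℕ =>
          (Function.update p.1 L (p.1 L + (q + 1)), p.2)) := by
      ext p
      rw [hB, Finset.mem_filter, hS, mem_Pset]
      simp only [Finset.mem_image, mem_Pset]
      constructor
      · rintro ⟨h1, h2⟩
        refine ⟨(Function.update p.1 L (p.1 L - (q + 1)), p.2), ?_, ?_⟩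
        · have hupd := Finset.sum_update_of_mem (Finset.mem_univ L) p.1 (p.1 L - (q + 1))
          have herase : ∑ i, p.1 i = ∑ i ∈ Finset.univ \ {L}, p.1 i + p.1 L :=
            Finset.sum_eq_sum_sdiff_singleton_add (Finset.mem_univ L) p.1
          simp only at hupd ⊢
          rw [hupd]
          omega
        · have hval : p.1 L - (q + 1) + (q + 1) = p.1 L := by omega
          simp only [Function.update_self, Function.update_idem, hval,
            Function.update_eq_self]
      · rintro ⟨x, hx, rfl⟩
        constructor
        · have hupd := Finset.sum_update_of_mem (Finset.mem_univ L) x.1 (x.1 L + (q + 1))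
          have herase : ∑ i, x.1 i = ∑ i ∈ Finset.univ \ {L}, x.1 i + x.1 L :=
            Finset.sum_eq_sum_sdiff_singleton_add (Finset.mem_univ L) x.1
          simp only at hupd ⊢
          rw [hupd]
          omega
        · simp [Function.update_self]
    rw [hBeq, Finset.card_image_of_injective]
    intro x y h
    simp only [Prod.mk.injEq] at h
    obtain ⟨h1, h2⟩ := h
    have hfun : x.1 = y.1 := by
      funext i
      by_cases hiL : i = L
      · rw [hiL]
        have := congrFun h1 L
        simp only [Function.update_self] at this
        omega
      · have := congrFun h1 i
        simpa [Function.update_of_ne hiL] using this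
    exact Prod.ext hfun h2
  -- assemble
  rw [hset, Set.ncard_coe_finset]
  have hle : B.card + V.card ≤ S.card := by
    rw [← Finset.card_union_of_disjoint hdisj]
    exact Finset.card_le_card hsub
  have hcards : (S \ (B ∪ V)).card = S.card - (B.card + V.card) := by
    rw [Finset.card_sdiff_of_subset hsub, Finset.card_union_of_disjoint hdisj]
  have e1 : S.card = ∑ c ∈ Finset.range ((d - 1) / 2 + 1), (d - 2 * c + q - 2).choose (q - 2) := by
    rw [hS, card_Pset' _ _ (by omega)]
    obtain ⟨e, he⟩ := hd
    have hdiv : d / 2 = (d - 1) / 2 := by omega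
    rw [hdiv]
    refine Finset.sum_congr rfl fun c _ => ?_
    congr 1 <;> omega
  have e2 : B.card = ∑ c ∈ Finset.range ((d - q - 1) / 2 + 1), (d - 2 * c - 3).choose (q - 2) := by
    rw [hBcard, card_Pset' _ _ (by omega)]
    have hdiv : (d - (q + 1)) / 2 = (d - q - 1) / 2 := by
      omega
    rw [hdiv]
    refine Finset.sum_congr rfl fun c hc => ?_
    rw [Finset.mem_range] at hc
    congr 1 <;> omega
  rw [hcards, Nat.cast_sub hle, Nat.cast_add, e1, e2, hVcard]
  push_cast [hq]
  ring
end

section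
/- Let n ≥ 2 and 1 ≤ q ≤ n − 1 be integers, and let d be an odd integer with d ≥ q + 1. Then the number of pairs (a, b), where a : Fin (n−q) → ℕ and b ∈ ℕ satisfy a_0 + ⋯ + a_{n−q−1} + 2b = d, a_0 ≤ d − q − 1, a_j ≤ d − 1 for all 1 ≤ j ≤ n − q − 1, and b ≤ d − 1, equals ∑_{c=0}^{(d−1)/2} C(d − 2c + n − q − 1, n − q − 1) − ∑_{c=0}^{⌊q/2⌋} C(n − 2c − 1, n − q − 1) − (n − q − 1). -/
/-!
Count the exponents `(a, b)` of all monomials `x ^ a * y ^ b` of weighted degree `d` by the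
exponent `b`: for each `b` stars and bars gives `C(d - 2b + m - 1, m - 1)` choices of `a`, where
`m = n - q`. Then remove the exponents that violate a bound. The bound `b ≤ d - 1` holds
automatically. If `a₀ ≥ d - q`, lowering `a₀` by `d - q` gives a bijection onto the exponents of
degree `q`. If `a_j ≥ d` for some `j ≥ 1`, then `(a, b) = (d • e_j, 0)`, which gives `m - 1` more
exponents. These two kinds of exponents are disjoint because `d - q > 0`.
-/

open Finset

lemma Finset.card_piAntidiag_univ {ι : Type*} [Fintype ι] [DecidableEq ι] (k : ℕ) :
    #(piAntidiag (univ : Finset ι) k) = (Fintype.card ι).multichoose k := by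
  rw [← map_sym_eq_piAntidiag, card_map, sym_univ, card_univ, Sym.card_sym_eq_multichoose]

lemma Nat.multichoose_eq_choose_pred {m : ℕ} (hm : 0 < m) (k : ℕ) :
    m.multichoose k = (k + m - 1).choose (m - 1) := by
  rw [multichoose_eq, show m + k - 1 = m - 1 + k by omega, ← choose_symm_add,
    show m - 1 + k = k + m - 1 by omega]

section WeightedExponents

variable (ι : Type*) [Fintype ι] [DecidableEq ι]

/-- Exponent vectors `(a, b)` of the monomials `x ^ a * y ^ b` of degree `s` in `k[x_i, y]`,
where each `x_i` has degree `1` and `y` has degree `2`. -/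
def weightedExponents (s : ℕ) : Finset ((ι → ℕ) × ℕ) :=
  (range (s / 2 + 1)).biUnion fun b => piAntidiag univ (s - 2 * b) ×ˢ {b}

variable {ι}

lemma mem_weightedExponents {s : ℕ} {p : (ι → ℕ) × ℕ} :
    p ∈ weightedExponents ι s ↔ ∑ j, p.1 j + 2 * p.2 = s := by
  change _ ↔ univ.sum p.1 + 2 * p.2 = s
  simp only [weightedExponents, mem_biUnion, mem_range, mem_product, mem_piAntidiag,
    mem_singleton, mem_univ, implies_true, and_true]
  constructor
  · rintro ⟨b, hb, hsum, rfl⟩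
    omega
  · intro h
    exact ⟨p.2, by omega, by omega, rfl⟩

lemma card_weightedExponents [Nonempty ι] (s : ℕ) :
    #(weightedExponents ι s) =
      ∑ b ∈ range (s / 2 + 1), (s - 2 * b + Fintype.card ι - 1).choose (Fintype.card ι - 1) := by
  rw [weightedExponents, card_biUnion]
  · refine sum_congr rfl fun b _ => ?_
    rw [card_product, card_singleton, mul_one, card_piAntidiag_univ,
      Nat.multichoose_eq_choose_pred Fintype.card_pos]
  · intro b _ b' _ hb
    exact disjoint_product.2 (.inr (disjoint_singleton.2 hb))

lemma sum_update_add_apply (a : ι → ℕ) (i : ι) (v : ℕ) :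
    ∑ j, Function.update a i v j + a i = ∑ j, a j + v := by
  rw [sum_update_of_mem (mem_univ i), ← add_sum_erase univ a (mem_univ i),
    sdiff_singleton_eq_erase]
  ring

lemma add_apply_le_sum (a : ι → ℕ) {i j : ι} (hij : i ≠ j) : a i + a j ≤ ∑ k, a k := by
  rw [← sum_pair hij]
  exact sum_le_sum_of_subset (subset_univ _)

lemma card_filter_le_apply_weightedExponents (i : ι) {s t : ℕ} (hts : t ≤ s) :
    #{p ∈ weightedExponents ι s | t ≤ p.1 i} = #(weightedExponents ι (s - t)) := by
  refine card_nbij' (fun p => (Function.update p.1 i (p.1 i - t), p.2))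
    (fun p => (Function.update p.1 i (p.1 i + t), p.2)) ?_ ?_ ?_ ?_
  · intro p hp
    simp only [coe_filter, Set.mem_ofPred_eq, mem_weightedExponents] at hp
    have := sum_update_add_apply p.1 i (p.1 i - t)
    simp only [mem_coe, mem_weightedExponents]
    omega
  · intro p hp
    simp only [mem_coe, mem_weightedExponents] at hp
    have := sum_update_add_apply p.1 i (p.1 i + t)
    simp only [coe_filter, Set.mem_ofPred_eq, mem_weightedExponents, Function.update_self]
    omega
  · intro p hp
    simp only [coe_filter, Set.mem_ofPred_eq] at hp
    simp [Nat.sub_add_cancel hp.2]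
  · intro p _
    simp

lemma card_filter_exists_le_apply_weightedExponents {s : ℕ} (hs : 0 < s) (J : Finset ι) :
    #{p ∈ weightedExponents ι s | ∃ j ∈ J, s ≤ p.1 j} = #J := by
  have hinj : Function.Injective fun j : ι => ((Pi.single j s : ι → ℕ), 0) := by
    intro j k h
    by_contra hjk
    simpa [hjk, hs.ne'] using congrFun (congrArg Prod.fst h) j
  rw [← card_map ⟨_, hinj⟩]
  congr 1
  ext p
  simp only [mem_filter, mem_weightedExponents, mem_map, Function.Embedding.coeFn_mk]
  constructor
  · rintro ⟨hsum, j, hj, hle⟩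
    have hpj : p.1 j ≤ ∑ k, p.1 k := single_le_sum (fun k _ => (p.1 k).zero_le) (mem_univ j)
    have hzero : ∀ k ≠ j, p.1 k = 0 := fun k hk => by
      have := add_apply_le_sum p.1 hk
      omega
    refine ⟨j, hj, Prod.ext (funext fun k => ?_) (by omega)⟩
    by_cases hk : k = j
    · subst hk
      simp only [Pi.single_eq_same]
      omega
    · simp [hk, hzero k hk]
  · rintro ⟨j, hj, rfl⟩
    exact ⟨by simp, j, hj, by simp⟩

theorem ncard_bounded_weightedExponents_add (i₀ : ι) {s t : ℕ} (ht : 0 < t) (hts : t ≤ s) :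
    {p | p ∈ weightedExponents ι s ∧ p.1 i₀ < t ∧ ∀ j ≠ i₀, p.1 j < s}.ncard
      + #(weightedExponents ι (s - t)) + (Fintype.card ι - 1) = #(weightedExponents ι s) := by
  rw [← coe_filter, Set.ncard_coe_finset, ← card_filter_le_apply_weightedExponents i₀ hts,
    ← card_univ, ← card_erase_of_mem (mem_univ i₀),
    ← card_filter_exists_le_apply_weightedExponents (ht.trans_le hts) (univ.erase i₀),
    ← card_union_of_disjoint, ← card_union_of_disjoint, ← filter_or, ← filter_or,
    filter_true_of_mem]
  · intro p _
    by_cases hA : t ≤ p.1 i₀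
    · exact .inl (.inr hA)
    by_cases hB : ∃ j ∈ univ.erase i₀, s ≤ p.1 j
    · exact .inr hB
    push Not at hA hB
    exact .inl (.inl ⟨hA, fun j hj => hB j (mem_erase.2 ⟨hj, mem_univ j⟩)⟩)
  · rw [← filter_or, disjoint_filter]
    rintro p hp (⟨-, hlt⟩ | hi₀) ⟨j, hj, hsj⟩
    · exact (hsj.trans_lt (hlt j (ne_of_mem_erase hj))).false
    · have := add_apply_le_sum p.1 (ne_of_mem_erase hj).symm
      rw [mem_weightedExponents] at hp
      omega
  · rw [disjoint_filter]
    rintro p - ⟨hlt, -⟩ hle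
    omega

end WeightedExponents

lemma setOf_le_sub_one_eq_bounded_weightedExponents {m s t : ℕ} (hm : 0 < m) (hs : 0 < s)
    (ht : 0 < t) :
    {p : (Fin m → ℕ) × ℕ | (∑ j, p.1 j) + 2 * p.2 = s ∧
        (∀ j : Fin m, ((j : ℕ) = 0 → p.1 j ≤ t - 1) ∧ (1 ≤ (j : ℕ) → p.1 j ≤ s - 1)) ∧
        p.2 ≤ s - 1} =
      {p | p ∈ weightedExponents (Fin m) s ∧ p.1 ⟨0, hm⟩ < t ∧ ∀ j ≠ ⟨0, hm⟩, p.1 j < s} := by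
  ext p
  simp only [Set.mem_ofPred_eq, mem_weightedExponents, Nat.le_sub_one_iff_lt hs,
    Nat.le_sub_one_iff_lt ht, ne_eq, Fin.ext_iff, Nat.one_le_iff_ne_zero]
  constructor
  · rintro ⟨hsum, hbound, -⟩
    exact ⟨hsum, (hbound _).1 rfl, fun j hj => (hbound j).2 hj⟩
  · rintro ⟨hsum, h₀, hpos⟩
    refine ⟨hsum, fun j => ⟨fun hj => ?_, hpos j⟩, by omega⟩
    rwa [show j = ⟨0, hm⟩ from Fin.ext hj]

theorem stmt_6_general (n q d : ℕ) (hn : 2 ≤ n) (hq2 : q ≤ n - 1)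
    (hd : Odd d) (hdq : q + 1 ≤ d) :
    (Set.ncard {p : (Fin (n - q) → ℕ) × ℕ |
        (∑ j, p.1 j) + 2 * p.2 = d ∧
        (∀ j : Fin (n - q), ((j : ℕ) = 0 → p.1 j ≤ d - q - 1) ∧ (1 ≤ (j : ℕ) → p.1 j ≤ d - 1)) ∧
        p.2 ≤ d - 1} : ℤ) =
      (∑ c ∈ Finset.range ((d - 1) / 2 + 1), ((d - 2 * c + n - q - 1).choose (n - q - 1) : ℤ))
        - (∑ c ∈ Finset.range (q / 2 + 1), ((n - 2 * c - 1).choose (n - q - 1) : ℤ))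
        - ((n : ℤ) - q - 1) := by
  have hm : 0 < n - q := by omega
  have : NeZero (n - q) := ⟨hm.ne'⟩
  have hcount := ncard_bounded_weightedExponents_add (⟨0, hm⟩ : Fin (n - q)) (s := d) (t := d - q)
    (by omega) (by omega)
  rw [Nat.sub_sub_self (by omega), card_weightedExponents, card_weightedExponents,
    Fintype.card_fin] at hcount
  have hd2 : d / 2 = (d - 1) / 2 := by obtain ⟨k, rfl⟩ := hd; omega
  have hdsum : ∑ c ∈ range (d / 2 + 1), (d - 2 * c + (n - q) - 1).choose (n - q - 1) =
      ∑ c ∈ range ((d - 1) / 2 + 1), (d - 2 * c + n - q - 1).choose (n - q - 1) := by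
    rw [hd2]
    exact sum_congr rfl fun c _ => by congr 1; omega
  have hqsum : ∑ c ∈ range (q / 2 + 1), (q - 2 * c + (n - q) - 1).choose (n - q - 1) =
      ∑ c ∈ range (q / 2 + 1), (n - 2 * c - 1).choose (n - q - 1) :=
    sum_congr rfl fun c hc => by rw [mem_range] at hc; congr 1; omega
  rw [hdsum, hqsum] at hcount
  rw [setOf_le_sub_one_eq_bounded_weightedExponents hm (by omega) (by omega), ← Nat.cast_sum,
    ← Nat.cast_sum]
  omega

/-- For `n ≥ 2`, `1 ≤ q ≤ n - 1`, and odd `d ≥ q + 1`, the number of pairs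
`(a, b)` with `a : Fin (n-q) → ℕ`, `b : ℕ`, `a 0 + ⋯ + a (n-q-1) + 2b = d`, `a 0 ≤ d - q - 1`,
`a j ≤ d - 1` for `1 ≤ j ≤ n - q - 1`, and `b ≤ d - 1`, equals
`∑_{c=0}^{(d-1)/2} C(d - 2c + n - q - 1, n - q - 1) - ∑_{c=0}^{⌊q/2⌋} C(n - 2c - 1, n - q - 1) - (n - q - 1)`. -/
theorem stmt_6 (n q d : ℕ) (hn : 2 ≤ n) (hq1 : 1 ≤ q) (hq2 : q ≤ n - 1)
    (hd : Odd d) (hdq : q + 1 ≤ d) :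
    (Set.ncard {p : (Fin (n - q) → ℕ) × ℕ |
        (∑ j, p.1 j) + 2 * p.2 = d ∧
        (∀ j : Fin (n - q), ((j : ℕ) = 0 → p.1 j ≤ d - q - 1) ∧ (1 ≤ (j : ℕ) → p.1 j ≤ d - 1)) ∧
        p.2 ≤ d - 1} : ℤ) =
      (∑ c ∈ Finset.range ((d - 1) / 2 + 1), ((d - 2 * c + n - q - 1).choose (n - q - 1) : ℤ))
        - (∑ c ∈ Finset.range (q / 2 + 1), ((n - 2 * c - 1).choose (n - q - 1) : ℤ))
        - ((n : ℤ) - q - 1) :=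
  stmt_6_general n q d hn hq2 hd hdq
end

section
/- Let q ≥ 2 be an integer and let d be an even integer with d ≥ q + 2. Then the number of pairs (a, b), where a : Fin q → ℕ and b ∈ ℕ satisfy a_0 + ⋯ + a_{q−1} + 2b = d, a_j ≤ d − 1 for all 0 ≤ j ≤ q − 2, a_{q−1} ≤ q + 1, and b ≤ d/2 − 1, equals ∑_{c=0}^{d/2} C(d − 2c + q − 1, q − 1) − ∑_{c=0}^{⌊(d−q−2)/2⌋} C(d − 2c − 3, q − 1) − q. -/
open Finset

/-- The finset of solutions of `∑ a + 2b = n`. -/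
def solSet (q n : ℕ) : Finset ((Fin q → ℕ) × ℕ) :=
  (Finset.range (n / 2 + 1)).biUnion fun c =>
    (Finset.piAntidiag (Finset.univ : Finset (Fin q)) (n - 2 * c)).image fun a => (a, c)

lemma mem_solSet {q n : ℕ} {p : (Fin q → ℕ) × ℕ} :
    p ∈ solSet q n ↔ (∑ j, p.1 j) + 2 * p.2 = n := by
  simp only [solSet, mem_biUnion, mem_range, mem_image, mem_piAntidiag]
  constructor
  · rintro ⟨c, hc, a, ⟨ha, -⟩, rfl⟩
    show (∑ j, a j) + 2 * c = n
    have ha' : (∑ j, a j) = n - 2 * c := ha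
    omega
  · intro h
    refine ⟨p.2, ?_, p.1, ⟨?_, fun i _ => mem_univ i⟩, rfl⟩
    · omega
    · show (∑ j, p.1 j) = n - 2 * p.2
      omega

lemma card_piAntidiag_univ (q m : ℕ) :
    (Finset.piAntidiag (Finset.univ : Finset (Fin q)) m).card = (q + m - 1).choose m := by
  classical
  rw [← Finset.map_sym_eq_piAntidiag, Finset.card_map]
  have h : (Finset.univ : Finset (Fin q)).sym m = (Finset.univ : Finset (Sym (Fin q) m)) := by
    ext s; simp [Finset.mem_sym_iff]
  rw [h, Finset.card_univ, Sym.card_sym_eq_choose, Fintype.card_fin]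

lemma card_solSet {q : ℕ} (hq : 1 ≤ q) (n : ℕ) :
    (solSet q n).card = ∑ c ∈ Finset.range (n / 2 + 1), (n - 2 * c + q - 1).choose (q - 1) := by
  classical
  rw [solSet, Finset.card_biUnion]
  · refine Finset.sum_congr rfl fun c _ => ?_
    rw [Finset.card_image_of_injective _ (fun a b h => (congrArg Prod.fst h : a = b)),
      card_piAntidiag_univ]
    have h1 : q + (n - 2 * c) - 1 = (q - 1) + (n - 2 * c) := by omega
    have h2 : (q - 1) + (n - 2 * c) = n - 2 * c + q - 1 := by omega
    rw [h1, Nat.choose_symm_add.symm, h2]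
  · intro c _ c' _ hne
    simp only [Finset.disjoint_left, mem_image]
    rintro p ⟨a, -, rfl⟩ ⟨b, -, hb⟩
    exact hne ((congrArg Prod.snd hb).symm)

/-- For `q ≥ 2` and even `d ≥ q + 2`, the number of pairs `(a, b)` with
`a : Fin q → ℕ`, `b : ℕ`, `a 0 + ⋯ + a (q-1) + 2b = d`, `a j ≤ d - 1` for `0 ≤ j ≤ q - 2`,
`a (q-1) ≤ q + 1`, and `b ≤ d/2 - 1`, equals
`∑_{c=0}^{d/2} C(d - 2c + q - 1, q - 1) - ∑_{c=0}^{⌊(d-q-2)/2⌋} C(d - 2c - 3, q - 1) - q`. -/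
theorem stmt_7 (q d : ℕ) (hq : 2 ≤ q) (hd : Even d) (hdq : q + 2 ≤ d) :
    (Set.ncard {p : (Fin q → ℕ) × ℕ |
        (∑ j, p.1 j) + 2 * p.2 = d ∧
        (∀ j : Fin q, ((j : ℕ) < q - 1 → p.1 j ≤ d - 1) ∧ ((j : ℕ) = q - 1 → p.1 j ≤ q + 1)) ∧
        p.2 ≤ d / 2 - 1} : ℤ) =
      (∑ c ∈ Finset.range (d / 2 + 1), ((d - 2 * c + q - 1).choose (q - 1) : ℤ))
        - (∑ c ∈ Finset.range ((d - q - 2) / 2 + 1), ((d - 2 * c - 3).choose (q - 1) : ℤ))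
        - (q : ℤ) := by
  classical
  have hq1 : 1 ≤ q := by omega
  obtain ⟨k, hk⟩ := hd
  have hk' : d = 2 * k := by omega
  set L : Fin q := ⟨q - 1, by omega⟩ with hL
  set good : (Fin q → ℕ) × ℕ → Prop := fun p =>
    (∀ j : Fin q, ((j : ℕ) < q - 1 → p.1 j ≤ d - 1) ∧ ((j : ℕ) = q - 1 → p.1 j ≤ q + 1)) ∧
      p.2 ≤ d / 2 - 1 with hgood
  -- the set in the statement as a finset
  have hset : {p : (Fin q → ℕ) × ℕ |
      (∑ j, p.1 j) + 2 * p.2 = d ∧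
      (∀ j : Fin q, ((j : ℕ) < q - 1 → p.1 j ≤ d - 1) ∧ ((j : ℕ) = q - 1 → p.1 j ≤ q + 1)) ∧
      p.2 ≤ d / 2 - 1} = ↑((solSet q d).filter good) := by
    ext p
    simp only [Set.mem_setOf_eq, Finset.coe_filter, mem_solSet, hgood]
  -- the injection adding q+2 to the last coordinate
  set φ : (Fin q → ℕ) × ℕ → (Fin q → ℕ) × ℕ :=
    fun p => (fun i => p.1 i + if i = L then q + 2 else 0, p.2) with hφ
  have hsum : ∀ a : Fin q → ℕ,
      (∑ i, (a i + if i = L then q + 2 else 0)) = (∑ i, a i) + (q + 2) := by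
    intro a
    rw [Finset.sum_add_distrib]
    simp [Finset.sum_ite_eq']
  have hφinj : Function.Injective φ := by
    rintro ⟨a, b⟩ ⟨a', b'⟩ h
    simp only [hφ, Prod.mk.injEq] at h
    obtain ⟨h1, h2⟩ := h
    subst h2
    simp only [Prod.mk.injEq, and_true]
    funext i
    have := congrFun h1 i
    omega
  set B1 : Finset ((Fin q → ℕ) × ℕ) := (solSet q (d - q - 2)).image φ with hB1
  have hmemB1 : ∀ p : (Fin q → ℕ) × ℕ,
      p ∈ B1 ↔ ((∑ j, p.1 j) + 2 * p.2 = d ∧ q + 2 ≤ p.1 L) := by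
    intro p
    simp only [hB1, mem_image, mem_solSet]
    constructor
    · rintro ⟨r, hr, rfl⟩
      simp only [hφ]
      constructor
      · rw [hsum r.1]; omega
      · simp
    · rintro ⟨hpd, hpL⟩
      refine ⟨(fun i => p.1 i - if i = L then q + 2 else 0, p.2), ?_, ?_⟩
      · have h1 : (∑ i, (p.1 i - if i = L then q + 2 else 0)) + (q + 2) = ∑ i, p.1 i := by
          rw [← hsum (fun i => p.1 i - if i = L then q + 2 else 0)]
          refine Finset.sum_congr rfl fun i _ => ?_
          by_cases hi : i = L
          · subst hi; simp; omega
          · simp [hi]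
        simp only
        omega
      · simp only [hφ]
        have h2 : (fun i => (p.1 i - if i = L then q + 2 else 0) + if i = L then q + 2 else 0)
            = p.1 := by
          funext i
          by_cases hi : i = L
          · subst hi; simp; omega
          · simp [hi]
        rw [h2]
  -- the exceptional points
  set E : Finset ((Fin q → ℕ) × ℕ) :=
    insert ((0 : Fin q → ℕ), d / 2)
      (((Finset.univ : Finset (Fin q)).filter fun j : Fin q => (j : ℕ) < q - 1).image
        fun j => (Pi.single j d, 0)) with hE
  have hmemE : ∀ p : (Fin q → ℕ) × ℕ,
      p ∈ E ↔ (p = ((0 : Fin q → ℕ), d / 2) ∨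
        ∃ j : Fin q, (j : ℕ) < q - 1 ∧ p = (Pi.single j d, 0)) := by
    intro p
    simp only [hE, mem_insert, mem_image, mem_filter, mem_univ, true_and]
    constructor
    · rintro (rfl | ⟨j, hj, rfl⟩)
      · exact Or.inl rfl
      · exact Or.inr ⟨j, hj, rfl⟩
    · rintro (rfl | ⟨j, hj, rfl⟩)
      · exact Or.inl rfl
      · exact Or.inr ⟨j, hj, rfl⟩
  have hcardE : E.card = q := by
    rw [hE, Finset.card_insert_of_notMem, Finset.card_image_of_injOn]
    · have hfe : (Finset.filter (fun j : Fin q => (j : ℕ) < q - 1)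
          (Finset.univ : Finset (Fin q))) = Finset.univ.erase L := by
        ext j
        simp only [mem_filter, mem_univ, true_and, mem_erase, and_true, ne_eq, hL,
          Fin.ext_iff]
        have := j.isLt
        omega
      rw [hfe, Finset.card_erase_of_mem (mem_univ L), Finset.card_univ, Fintype.card_fin]
      omega
    · intro j _ j' _ h
      by_contra hne
      have h1 := congrFun (congrArg Prod.fst h) j
      simp only [Pi.single_eq_same] at h1
      rw [Pi.single_eq_of_ne hne] at h1
      omega
    · simp only [mem_image, mem_filter, mem_univ, true_and, not_exists, not_and]
      intro j _
      intro hc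
      have h2 : (0 : ℕ) = d / 2 := congrArg Prod.snd hc
      omega
  -- disjointness
  have hdisj : Disjoint B1 E := by
    rw [Finset.disjoint_left]
    intro p hp hpe
    have h1 := ((hmemB1 p).mp hp).2
    rcases (hmemE p).mp hpe with rfl | ⟨j, hj, rfl⟩
    · simp at h1
    · have hLval : (L : ℕ) = q - 1 := rfl
      have hjL : L ≠ j := fun hc => by rw [hc] at hLval; omega
      simp [Pi.single_eq_of_ne hjL] at h1
  -- the bad set splits
  have hBeq : (solSet q d).filter (fun p => ¬ good p) = B1 ∪ E := by
    ext p
    simp only [mem_filter, mem_union, mem_solSet, hmemB1, hmemE]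
    constructor
    · rintro ⟨hp, hng⟩
      by_cases hb : p.2 ≤ d / 2 - 1
      · have hj : ∃ j : Fin q,
            ¬(((j : ℕ) < q - 1 → p.1 j ≤ d - 1) ∧ ((j : ℕ) = q - 1 → p.1 j ≤ q + 1)) := by
          by_contra hc
          push_neg at hc
          exact hng ⟨fun j => ⟨(hc j).1, (hc j).2⟩, hb⟩
        obtain ⟨j, hj⟩ := hj
        by_cases hjlt : (j : ℕ) < q - 1
        · -- x_j exponent too big: p = (Pi.single j d, 0)
          have hval : ¬(p.1 j ≤ d - 1) := by
            intro hc
            exact hj ⟨fun _ => hc, fun hc' => by omega⟩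
          have hjd : d ≤ p.1 j := by omega
          have hle : p.1 j ≤ ∑ i, p.1 i :=
            Finset.single_le_sum (fun i _ => Nat.zero_le _) (mem_univ j)
          have herase : p.1 j + ∑ i ∈ Finset.univ.erase j, p.1 i = ∑ i, p.1 i :=
            Finset.add_sum_erase _ _ (mem_univ j)
          have h0 : ∑ i ∈ Finset.univ.erase j, p.1 i = 0 := by omega
          have hp2 : p.2 = 0 := by omega
          have hpj : p.1 j = d := by omega
          refine Or.inr (Or.inr ⟨j, hjlt, ?_⟩)
          have hp1 : p.1 = Pi.single j d := by
            funext i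
            by_cases hi : i = j
            · subst hi; rw [Pi.single_eq_same]; exact hpj
            · rw [Pi.single_eq_of_ne hi]
              exact (Finset.sum_eq_zero_iff.mp h0) i (Finset.mem_erase.mpr ⟨hi, mem_univ i⟩)
          rw [← hp1, ← hp2]
        · -- last exponent too big
          have hjq : (j : ℕ) = q - 1 := by
            have := j.isLt
            omega
          have hval : ¬(p.1 j ≤ q + 1) := by
            intro hc
            exact hj ⟨fun h' => absurd h' hjlt, fun _ => hc⟩
          have hjL : j = L := by
            rw [hL, Fin.ext_iff]
            exact hjq
          subst hjL
          exact Or.inl ⟨hp, by omega⟩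
      · -- b too big: p = (0, d/2)
        have hb2 : d / 2 ≤ p.2 := by omega
        have hs0 : ∑ j, p.1 j = 0 := by omega
        have hp2 : p.2 = d / 2 := by omega
        refine Or.inr (Or.inl ?_)
        have hp1 : p.1 = 0 := by
          funext i
          exact (Finset.sum_eq_zero_iff.mp hs0) i (mem_univ i)
        rw [← hp1, ← hp2]
    · rintro (⟨hp, hpL⟩ | rfl | ⟨j, hj, rfl⟩)
      · refine ⟨hp, fun hg => ?_⟩
        have := (hg.1 L).2 (by rw [hL])
        omega
      · constructor
        · simp only [Pi.zero_apply, Finset.sum_const_zero]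
          omega
        · intro hg
          have := hg.2
          simp only at this
          omega
      · constructor
        · simp only [Finset.sum_pi_single', mem_univ, if_pos]
          omega
        · intro hg
          have h3 := (hg.1 j).1 hj
          simp only [Pi.single_eq_same] at h3
          omega
  -- cardinality bookkeeping
  have hfilter := Finset.card_filter_add_card_filter_not (s := solSet q d) (p := good)
  have hcardB : ((solSet q d).filter (fun p => ¬ good p)).card
      = (solSet q (d - q - 2)).card + q := by
    rw [hBeq, Finset.card_union_of_disjoint hdisj, hcardE, hB1,
      Finset.card_image_of_injective _ hφinj]
  have h1 := card_solSet hq1 d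
  have h2 : (solSet q (d - q - 2)).card
      = ∑ c ∈ Finset.range ((d - q - 2) / 2 + 1), (d - 2 * c - 3).choose (q - 1) := by
    rw [card_solSet hq1]
    refine Finset.sum_congr rfl fun c hc => ?_
    rw [Finset.mem_range] at hc
    congr 1
    omega
  rw [hset, Set.ncard_coe_finset]
  rw [← Nat.cast_sum, ← Nat.cast_sum, ← h1, ← h2]
  omega
end

section
/- Let n ≥ 3 be an odd integer and let d be an odd integer with d ≥ n + 2. In R, set I = ⟨x_0^d, …, x_{n−1}^d, y^d⟩ and m = x_0^{d−1}⋯x_{n−2}^{d−1}x_{n−1}^{d−2}y^{(n+1)/2}. Then a monomial u of weighted degree d satisfies u·m ∉ I if and only if u = x_{n−1}·y^{(d−1)/2}. In particular, exactly one monomial of weighted degree d fails to annihilate m modulo I. -/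
open MvPolynomial

lemma monomial_prod_aux {k : Type*} [Field k] {n : ℕ} {ι : Type*} (s : Finset ι)
    (f : ι → ((Fin n ⊕ Unit) →₀ ℕ)) :
    (∏ i ∈ s, monomial (f i) (1 : k)) = monomial (∑ i ∈ s, f i) 1 := by
  induction s using Finset.cons_induction with
  | empty => simp
  | cons a s ha ih => rw [Finset.prod_cons, Finset.sum_cons, ih, monomial_mul, one_mul]

/-- Let `n ≥ 3` be odd and `d` odd with `d ≥ n + 2`. In
`R = k[x_0, …, x_{n-1}, y]` (with `deg x_j = 1`, `deg y = 2`), set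
`I = ⟨x_0^d, …, x_{n-1}^d, y^d⟩` and `m = x_0^{d-1} ⋯ x_{n-2}^{d-1} x_{n-1}^{d-2} y^{(n+1)/2}`.
Then a monomial `u` of weighted degree `d` satisfies `u * m ∉ I` if and only if
`u = x_{n-1} * y^{(d-1)/2}`. -/
theorem stmt_9 (k : Type*) [Field k] (n : ℕ) (hn : 3 ≤ n) (hnodd : Odd n)
    (d : ℕ) (hd : Odd d) (hdn : n + 2 ≤ d) (σ : (Fin n ⊕ Unit) →₀ ℕ) (hσ : degw n σ = d) :
    (monomial σ (1 : k) *
        ((∏ j : Fin n, X (Sum.inl j) ^ (if (j : ℕ) = n - 1 then d - 2 else d - 1)) *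
          X (Sum.inr ()) ^ ((n + 1) / 2)) ∉
      Ideal.span ({(X (Sum.inr ()) : MvPolynomial (Fin n ⊕ Unit) k) ^ d} ∪
        Set.range fun j : Fin n => (X (Sum.inl j) : MvPolynomial (Fin n ⊕ Unit) k) ^ d))
    ↔ monomial σ (1 : k) =
        X (Sum.inl (⟨n - 1, by omega⟩ : Fin n)) * X (Sum.inr ()) ^ ((d - 1) / 2) := by
  classical
  obtain ⟨kd, hkd⟩ := hd
  obtain ⟨kn, hkn⟩ := hnodd
  set p : Fin n := ⟨n - 1, by omega⟩ with hp
  set e : Fin n → ℕ := fun j => if (j : ℕ) = n - 1 then d - 2 else d - 1 with he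
  set τ : (Fin n ⊕ Unit) →₀ ℕ :=
    (∑ j : Fin n, Finsupp.single (Sum.inl j) (e j)) + Finsupp.single (Sum.inr ()) ((n + 1) / 2)
    with hτ
  -- values of τ
  have hsum_l : ∀ j : Fin n, (∑ j' : Fin n, Finsupp.single (Sum.inl j') (e j'))
      (Sum.inl j : Fin n ⊕ Unit) = e j := by
    intro j
    rw [Finsupp.finset_sum_apply, Finset.sum_eq_single j]
    · simp
    · intro b _ hb
      simp [Finsupp.single_apply, hb]
    · simp
  have hτl : ∀ j : Fin n, τ (Sum.inl j) = e j := by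
    intro j
    simp [hτ, Finsupp.add_apply, hsum_l j]
  have hτr : τ (Sum.inr ()) = (n + 1) / 2 := by
    simp [hτ, Finsupp.add_apply, Finsupp.finset_sum_apply]
  -- the product is a single monomial
  have hm : (monomial σ (1 : k)) *
      ((∏ j : Fin n, X (Sum.inl j) ^ e j) * X (Sum.inr ()) ^ ((n + 1) / 2))
      = monomial (σ + τ) 1 := by
    have h1 : (∏ j : Fin n, (X (Sum.inl j) : MvPolynomial (Fin n ⊕ Unit) k) ^ e j)
        = monomial (∑ j : Fin n, Finsupp.single (Sum.inl j) (e j)) 1 := by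
      rw [← monomial_prod_aux]
      exact Finset.prod_congr rfl fun j _ => X_pow_eq_monomial
    rw [h1, X_pow_eq_monomial, monomial_mul, monomial_mul, one_mul, one_mul]
  -- the generating set as an image
  have hset : ({(X (Sum.inr ()) : MvPolynomial (Fin n ⊕ Unit) k) ^ d} ∪
        Set.range fun j : Fin n => (X (Sum.inl j) : MvPolynomial (Fin n ⊕ Unit) k) ^ d)
      = (fun s => monomial s (1 : k)) ''
        ({Finsupp.single (Sum.inr () : Fin n ⊕ Unit) d} ∪
          Set.range fun j : Fin n => Finsupp.single (Sum.inl j : Fin n ⊕ Unit) d) := by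
    rw [Set.image_union, Set.image_singleton, ← Set.range_comp]
    simp [Function.comp_def, X_pow_eq_monomial]
  -- membership criterion
  have hmem : (monomial σ (1 : k)) *
      ((∏ j : Fin n, X (Sum.inl j) ^ e j) * X (Sum.inr ()) ^ ((n + 1) / 2)) ∈
      Ideal.span ({(X (Sum.inr ()) : MvPolynomial (Fin n ⊕ Unit) k) ^ d} ∪
        Set.range fun j : Fin n => (X (Sum.inl j) : MvPolynomial (Fin n ⊕ Unit) k) ^ d)
      ↔ (d ≤ σ (Sum.inr ()) + (n + 1) / 2 ∨ ∃ j : Fin n, d ≤ σ (Sum.inl j) + e j) := by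
    rw [hm, hset, mem_ideal_span_monomial_image]
    have hsupp : (monomial (σ + τ) (1 : k)).support = {σ + τ} := by
      rw [support_monomial, if_neg one_ne_zero]
    rw [hsupp]
    simp only [Finset.mem_singleton, forall_eq, Set.mem_union, Set.mem_singleton_iff,
      Set.mem_range]
    constructor
    · rintro ⟨si, (rfl | ⟨j, rfl⟩), hle⟩
      · left
        have := Finsupp.single_le_iff.mp hle
        rwa [Finsupp.add_apply, hτr] at this
      · right
        refine ⟨j, ?_⟩
        have := Finsupp.single_le_iff.mp hle
        rwa [Finsupp.add_apply, hτl] at this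
    · rintro (h | ⟨j, h⟩)
      · exact ⟨_, Or.inl rfl, Finsupp.single_le_iff.mpr (by rw [Finsupp.add_apply, hτr]; exact h)⟩
      · exact ⟨_, Or.inr ⟨j, rfl⟩,
          Finsupp.single_le_iff.mpr (by rw [Finsupp.add_apply, hτl]; exact h)⟩
  -- the RHS as equality of exponent vectors
  have hrhs : (monomial σ (1 : k) =
        X (Sum.inl p) * X (Sum.inr ()) ^ ((d - 1) / 2))
      ↔ σ = Finsupp.single (Sum.inl p : Fin n ⊕ Unit) 1 +
          Finsupp.single (Sum.inr ()) ((d - 1) / 2) := by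
    rw [show (X (Sum.inl p) : MvPolynomial (Fin n ⊕ Unit) k) = X (Sum.inl p) ^ 1 from
      (pow_one _).symm, X_pow_eq_monomial, X_pow_eq_monomial, monomial_mul, one_mul]
    exact ⟨fun h => monomial_left_injective (one_ne_zero) h, fun h => by rw [h]⟩
  rw [hmem, hrhs]
  have hpd : (p : ℕ) = n - 1 := rfl
  -- arithmetic
  have hσd : (∑ j : Fin n, σ (Sum.inl j)) + 2 * σ (Sum.inr ()) = d := hσ
  constructor
  · intro h
    push_neg at h
    obtain ⟨h1, h2⟩ := h
    have hzero : ∀ j : Fin n, j ≠ p → σ (Sum.inl j) = 0 := by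
      intro j hj
      have hje : e j = d - 1 := by
        rw [he]
        simp only [if_neg (fun hc => hj (Fin.ext (by rw [hpd]; exact hc)))]
      have := h2 j
      rw [hje] at this
      omega
    have hsum : (∑ j : Fin n, σ (Sum.inl j)) = σ (Sum.inl p) := by
      rw [Finset.sum_eq_single p (fun b _ hb => hzero b hb) (by simp)]
    have hep : e p = d - 2 := by rw [he]; simp [hpd]
    have hple : σ (Sum.inl p) + (d - 2) < d := by rw [← hep]; exact h2 p
    have hp1 : σ (Sum.inl p) = 1 := by omega
    have hB : σ (Sum.inr ()) = (d - 1) / 2 := by omega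
    ext x
    rcases x with j | u
    · rw [Finsupp.add_apply, Finsupp.single_apply, Finsupp.single_apply]
      by_cases hj : j = p
      · subst hj; simp [hp1]
      · rw [if_neg (fun hc => hj (Sum.inl_injective hc).symm), if_neg (by simp)]
        simpa using hzero j hj
    · rw [Finsupp.add_apply, Finsupp.single_apply, Finsupp.single_apply]
      simp [hB]
  · intro h
    have hl : ∀ j : Fin n, σ (Sum.inl j) = if j = p then 1 else 0 := by
      intro j
      rw [h, Finsupp.add_apply, Finsupp.single_apply, Finsupp.single_apply]
      by_cases hj : j = p
      · subst hj; simp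
      · rw [if_neg (fun hc => hj (Sum.inl_injective hc).symm), if_neg hj, if_neg (by simp)]
        rfl
    have hr : σ (Sum.inr ()) = (d - 1) / 2 := by
      rw [h, Finsupp.add_apply, Finsupp.single_apply, Finsupp.single_apply]
      simp
    rintro (hc | ⟨j, hc⟩)
    · rw [hr] at hc
      omega
    · rw [hl j] at hc
      by_cases hj : j = p
      · rw [if_pos hj] at hc
        have : e j = d - 2 := by
          rw [he]; simp [hj, hpd]
        rw [this] at hc
        omega
      · rw [if_neg hj] at hc
        have : e j = d - 1 := by
          rw [he]
          simp only [if_neg (fun hcon => hj (Fin.ext (by rw [hpd]; exact hcon)))]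
        rw [this] at hc
        omega
end

section
/- Let n ≥ 2 be an even integer and let d be an odd integer with d ≥ n + 3. In R, set I = ⟨x_0^d, …, x_{n−1}^d, y^d⟩ and m = x_0^{d−1}⋯x_{n−2}^{d−1}x_{n−1}^{d−2}y^{(d+n+1)/2}. Then m ∉ I, m has weighted degree (n+1)·d, and u·m ∈ I for every monomial u of weighted degree d. -/
open MvPolynomial

/-- The exponent vector of the monomial
`m = x_0^{d-1} ⋯ x_{n-2}^{d-1} x_{n-1}^{d-2} y^{(d+n+1)/2}`. -/
noncomputable def expm (n d : ℕ) : (Fin n ⊕ Unit) →₀ ℕ :=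
  Finsupp.equivFunOnFinite.symm
    (Sum.elim (fun j : Fin n => if (j : ℕ) = n - 1 then d - 2 else d - 1)
      (fun _ => (d + n + 1) / 2))

lemma expm_inl (n d : ℕ) (j : Fin n) :
    expm n d (Sum.inl j) = if (j : ℕ) = n - 1 then d - 2 else d - 1 := rfl

lemma expm_inr (n d : ℕ) : expm n d (Sum.inr ()) = (d + n + 1) / 2 := rfl

/-- Let `n ≥ 2` be even and `d` odd with `d ≥ n + 3`. In
`R = k[x_0, …, x_{n-1}, y]` (with `deg x_j = 1`, `deg y = 2`), set
`I = ⟨x_0^d, …, x_{n-1}^d, y^d⟩` and `m = x_0^{d-1} ⋯ x_{n-2}^{d-1} x_{n-1}^{d-2} y^{(d+n+1)/2}`.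
Then `m ∉ I`, `m` has weighted degree `(n+1)·d`, and `u * m ∈ I` for every monomial `u` of
weighted degree `d`. -/
theorem stmt_10 (k : Type*) [Field k] (n : ℕ) (hn : 2 ≤ n) (hneven : Even n)
    (d : ℕ) (hd : Odd d) (hdn : n + 3 ≤ d) :
    (monomial (expm n d) (1 : k) ∉
        Ideal.span ({(X (Sum.inr ()) : MvPolynomial (Fin n ⊕ Unit) k) ^ d} ∪
          Set.range fun j : Fin n => (X (Sum.inl j) : MvPolynomial (Fin n ⊕ Unit) k) ^ d)) ∧
    degw n (expm n d) = (n + 1) * d ∧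
    ∀ σ : (Fin n ⊕ Unit) →₀ ℕ, degw n σ = d →
      monomial σ (1 : k) * monomial (expm n d) (1 : k) ∈
        Ideal.span ({(X (Sum.inr ()) : MvPolynomial (Fin n ⊕ Unit) k) ^ d} ∪
          Set.range fun j : Fin n => (X (Sum.inl j) : MvPolynomial (Fin n ⊕ Unit) k) ^ d) := by
  classical
  have hd2 : d % 2 = 1 := Nat.odd_iff.mp hd
  have hn2 : n % 2 = 0 := Nat.even_iff.mp hneven
  have hi : n - 1 < n := by omega
  set i : Fin n := ⟨n - 1, hi⟩ with hidef
  -- rewrite the generating set as an image of monomials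
  have hset :
      ({(X (Sum.inr ()) : MvPolynomial (Fin n ⊕ Unit) k) ^ d} ∪
        Set.range fun j : Fin n => (X (Sum.inl j) : MvPolynomial (Fin n ⊕ Unit) k) ^ d)
      = (fun s => monomial s (1 : k)) ''
        ({Finsupp.single (Sum.inr ()) d} ∪
          Set.range fun j : Fin n => Finsupp.single (Sum.inl j) d) := by
    rw [Set.image_union, Set.image_singleton, ← Set.range_comp]
    simp [Function.comp_def, X_pow_eq_monomial]
  -- the key sum computation
  have hsum : ∀ σ : (Fin n ⊕ Unit) →₀ ℕ,
      (∑ j : Fin n, σ (Sum.inl j)) = σ (Sum.inl i) + ∑ j ∈ Finset.univ.erase i, σ (Sum.inl j) :=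
    fun σ => (Finset.add_sum_erase _ _ (Finset.mem_univ i)).symm
  have herase : ∀ j ∈ Finset.univ.erase i, expm n d (Sum.inl j) = d - 1 := by
    intro j hj
    rw [expm_inl, if_neg]
    intro hval
    exact (Finset.mem_erase.mp hj).1 (Fin.ext hval)
  have hsumexp : (∑ j : Fin n, expm n d (Sum.inl j)) = (d - 2) + (n - 1) * (d - 1) := by
    rw [hsum (expm n d), Finset.sum_congr rfl herase, Finset.sum_const,
      Finset.card_erase_of_mem (Finset.mem_univ i)]
    simp [expm_inl, hidef, Nat.smul_one_eq_cast]
  constructor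
  · -- m ∉ I
    rw [hset, mem_ideal_span_monomial_image]
    intro h
    have h1 := h (expm n d) (by simp [support_monomial])
    obtain ⟨si, hsi, hle⟩ := h1
    rcases hsi with hsi | ⟨j, rfl⟩
    · rw [Set.mem_singleton_iff] at hsi
      subst hsi
      rw [Finsupp.single_le_iff, expm_inr] at hle
      omega
    · rw [Finsupp.single_le_iff, expm_inl] at hle
      split at hle <;> omega
  constructor
  · -- degree computation
    rw [degw, hsumexp, expm_inr]
    obtain ⟨p, rfl⟩ : ∃ p, n = p + 2 := ⟨n - 2, by omega⟩
    obtain ⟨q, rfl⟩ : ∃ q, d = q + 5 := ⟨d - 5, by omega⟩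
    have h2 : 2 * ((q + 5 + (p + 2) + 1) / 2) = q + p + 8 := by omega
    rw [h2]
    have e1 : q + 5 - 2 = q + 3 := rfl
    have e2 : p + 2 - 1 = p + 1 := rfl
    have e3 : q + 5 - 1 = q + 4 := rfl
    rw [e1, e2, e3]
    ring
  · -- multiplication into the ideal
    intro σ hσ
    rw [monomial_mul, one_mul, hset, mem_ideal_span_monomial_image]
    intro xi hxi
    rw [support_monomial, if_neg one_ne_zero, Finset.mem_singleton] at hxi
    subst hxi
    rw [degw] at hσ
    by_cases hy : d ≤ σ (Sum.inr ()) + (d + n + 1) / 2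
    · refine ⟨Finsupp.single (Sum.inr ()) d, Or.inl rfl, ?_⟩
      rw [Finsupp.single_le_iff, Finsupp.add_apply, expm_inr]
      exact hy
    · have hfin : ∃ j : Fin n, d ≤ σ (Sum.inl j) + expm n d (Sum.inl j) := by
        by_contra hcon
        push_neg at hcon
        have hz : ∀ j ∈ Finset.univ.erase i, σ (Sum.inl j) = 0 := by
          intro j hj
          have := hcon j
          rw [herase j hj] at this
          omega
        have hlast : σ (Sum.inl i) ≤ 1 := by
          have := hcon i
          rw [expm_inl, if_pos rfl] at this
          omega
        have hsσ : (∑ j : Fin n, σ (Sum.inl j)) ≤ 1 := by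
          rw [hsum σ, Finset.sum_congr rfl hz, Finset.sum_const, smul_zero]
          omega
        omega
      obtain ⟨j, hj⟩ := hfin
      refine ⟨Finsupp.single (Sum.inl j) d, Or.inr ⟨j, rfl⟩, ?_⟩
      rw [Finsupp.single_le_iff, Finsupp.add_apply]
      exact hj
end

section
/- Let q ≥ 1 and d ≥ q + 1 be integers. Then the number of functions a : Fin (q+1) → ℕ with a_0 + ⋯ + a_q = d, a_j ≤ d − 1 for all 0 ≤ j ≤ q − 1, and a_q ≤ q, equals C(d+q, q) − C(d−1, q) − q. -/
/-!
By stars and bars there are `C(d+q, q)` compositions `a` of `d` into `q+1` parts. The excluded ones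
are those with `a_q ≥ q+1`, which lowering `a_q` by `q+1` matches with the `C(d-1, q)` compositions
of `d-q-1`, and those with `a_j ≥ d` for some `j < q`, which must be `d • e_j`: `q` of them. These
two families are disjoint because `d • e_j` has last coordinate `0`.
-/

open Finset

namespace Finset

variable {α : Type*} [Fintype α] [DecidableEq α]

theorem card_piAntidiag_univ_nat (n : ℕ) :
    #(piAntidiag (univ : Finset α) n) = (Fintype.card α + n - 1).choose n := by
  rw [card_eq_of_equiv_fintype ((Equiv.subtypeEquivRight fun f => by simp).trans
    (Sym.equivNatSumOfFintype α n).symm), Sym.card_sym_eq_choose]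

theorem card_piAntidiag_univ_fin_succ (k n : ℕ) :
    #(piAntidiag (univ : Finset (Fin (k + 1))) n) = (n + k).choose k := by
  rw [card_piAntidiag_univ_nat, Fintype.card_fin, show k + 1 + n - 1 = n + k by omega,
    Nat.choose_symm_add]

theorem card_filter_le_apply_piAntidiag_univ (i : α) {m n : ℕ} (hmn : m ≤ n) :
    #((piAntidiag (univ : Finset α) n).filter fun f => m ≤ f i) =
      #(piAntidiag (univ : Finset α) (n - m)) := by
  have hsingle : ∀ f : α → ℕ, m ≤ f i → Pi.single i m ≤ f := fun f h j => by
    by_cases hj : j = i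
    · subst hj; simpa using h
    · simp [hj]
  have hsum : ∀ g : α → ℕ, univ.sum (g + Pi.single i m) = univ.sum g + m := fun g =>
    sum_add_distrib.trans (by rw [Fintype.sum_pi_single'])
  refine card_nbij' (fun f => f - Pi.single i m) (fun g => g + Pi.single i m) ?_ ?_ ?_ ?_
  · intro f hf
    simp only [coe_filter, mem_piAntidiag, mem_univ, implies_true, and_true, mem_coe] at hf ⊢
    obtain ⟨hfn, hfi⟩ := hf
    have hsub := hsum (f - Pi.single i m)
    rw [tsub_add_cancel_of_le (hsingle f hfi)] at hsub
    omega
  · intro g hg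
    simp only [coe_filter, mem_piAntidiag, mem_univ, implies_true, and_true, mem_coe] at hg ⊢
    refine ⟨?_, by simp⟩
    rw [hsum, hg]
    omega
  · intro f hf
    exact tsub_add_cancel_of_le (hsingle f (mem_filter.1 hf).2)
  · intro g _
    exact add_tsub_cancel_right g _

theorem eq_single_of_mem_piAntidiag_univ_of_le {f : α → ℕ} {n : ℕ} {i : α}
    (hf : f ∈ piAntidiag univ n) (hi : n ≤ f i) : f = Pi.single i n := by
  have hle : ∀ j ∈ univ, (Pi.single i n : α → ℕ) j ≤ f j := fun j _ => by
    by_cases hj : j = i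
    · subst hj; simpa using hi
    · simp [hj]
  have hsum : ∑ j, (Pi.single i n : α → ℕ) j = ∑ j, f j := by
    rw [Fintype.sum_pi_single', (mem_piAntidiag.1 hf).1]
  exact funext fun j => ((sum_eq_sum_iff_of_le hle).1 hsum j (mem_univ j)).symm

theorem filter_exists_le_apply_piAntidiag_univ (s : Finset α) (n : ℕ)
    [DecidablePred fun f : α → ℕ => ∃ i ∈ s, n ≤ f i] :
    (piAntidiag (univ : Finset α) n).filter (fun f : α → ℕ => ∃ i ∈ s, n ≤ f i) =
      s.image fun i => (Pi.single i n : α → ℕ) := by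
  ext f
  simp only [mem_filter, mem_image]
  constructor
  · rintro ⟨hf, i, hi, hle⟩
    exact ⟨i, hi, (eq_single_of_mem_piAntidiag_univ_of_le hf hle).symm⟩
  · rintro ⟨i, hi, rfl⟩
    exact ⟨by simp, i, hi, by simp⟩

theorem card_filter_exists_le_apply_piAntidiag_univ (s : Finset α) {n : ℕ} (hn : n ≠ 0)
    [DecidablePred fun f : α → ℕ => ∃ i ∈ s, n ≤ f i] :
    #((piAntidiag (univ : Finset α) n).filter fun f : α → ℕ => ∃ i ∈ s, n ≤ f i) = #s := by
  rw [filter_exists_le_apply_piAntidiag_univ]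
  refine card_image_of_injective s fun i j hij => ?_
  by_contra hne
  simpa [hne, hn] using congrFun hij i

end Finset

theorem stmt_11_general (q d : ℕ) (hd : q + 1 ≤ d) :
    (Set.ncard {a : Fin (q + 1) → ℕ |
        (∑ j, a j) = d ∧
        (∀ j : Fin (q + 1), ((j : ℕ) < q → a j ≤ d - 1) ∧ ((j : ℕ) = q → a j ≤ q))} : ℤ) =
      ((d + q).choose q : ℤ) - ((d - 1).choose q : ℤ) - (q : ℤ) := by
  let s : Finset (Fin (q + 1)) := univ.map Fin.castSuccEmb
  have hS : {a : Fin (q + 1) → ℕ | (∑ j, a j) = d ∧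
      (∀ j : Fin (q + 1), ((j : ℕ) < q → a j ≤ d - 1) ∧ ((j : ℕ) = q → a j ≤ q))} =
      ↑((piAntidiag univ d).filter fun a => ¬ (q + 1 ≤ a (Fin.last q) ∨ ∃ j ∈ s, d ≤ a j)) := by
    have hval : ∀ i : Fin q, (i : ℕ) ≠ q := fun i => i.isLt.ne
    ext a
    simp [s, Fin.forall_fin_succ', hval, Nat.le_sub_one_iff_lt (by omega : 0 < d), and_comm]
  have hdisj : Disjoint ((piAntidiag univ d).filter fun a => q + 1 ≤ a (Fin.last q))
      ((piAntidiag univ d).filter fun a => ∃ j ∈ s, d ≤ a j) := by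
    refine disjoint_filter.2 fun a ha hlast ⟨j, hj, hle⟩ => ?_
    obtain ⟨j, -, rfl⟩ := mem_map.1 hj
    rw [eq_single_of_mem_piAntidiag_univ_of_le ha hle] at hlast
    simp [(Fin.castSucc_lt_last j).ne] at hlast
  have hlarge_last : #((piAntidiag univ d).filter fun a => q + 1 ≤ a (Fin.last q)) =
      (d - 1).choose q := by
    rw [card_filter_le_apply_piAntidiag_univ _ hd, card_piAntidiag_univ_fin_succ,
      show d - (q + 1) + q = d - 1 by omega]
  have hlarge_other : #((piAntidiag univ d).filter fun a => ∃ j ∈ s, d ≤ a j) = q := by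
    rw [card_filter_exists_le_apply_piAntidiag_univ s (by omega), card_map, card_univ,
      Fintype.card_fin]
  have hcount := card_filter_add_card_filter_not (s := piAntidiag univ d)
    fun a => q + 1 ≤ a (Fin.last q) ∨ ∃ j ∈ s, d ≤ a j
  rw [filter_or, card_union_of_disjoint hdisj, hlarge_last, hlarge_other,
    card_piAntidiag_univ_fin_succ] at hcount
  rw [hS, Set.ncard_coe_finset]
  omega

/-- For `q ≥ 1` and `d ≥ q + 1`, the number of functions `a : Fin (q+1) → ℕ`
with `a 0 + ⋯ + a q = d`, `a j ≤ d - 1` for `0 ≤ j ≤ q - 1`, and `a q ≤ q`, equals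
`C(d+q, q) - C(d-1, q) - q`. -/
theorem stmt_11 (q d : ℕ) (hq : 1 ≤ q) (hd : q + 1 ≤ d) :
    (Set.ncard {a : Fin (q + 1) → ℕ |
        (∑ j, a j) = d ∧
        (∀ j : Fin (q + 1), ((j : ℕ) < q → a j ≤ d - 1) ∧ ((j : ℕ) = q → a j ≤ q))} : ℤ) =
      ((d + q).choose q : ℤ) - ((d - 1).choose q : ℤ) - (q : ℤ) :=
  stmt_11_general q d hd
end

section
/- Let n ≥ 3 and 2 ≤ q ≤ n − 1 be integers. Then there exists D ∈ ℕ such that for all odd integers d ≥ D: C(d+q, q) − C(d−1, q) − q ≤ N(d) − n − C(d+n−q+1, n−q+1) + C(n+1, n−q+1) + (n−q+1), where N(d) = ∑_{c=0}^{(d−1)/2} C(d − 2c + n − 1, n − 1). -/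
open Finset

lemma hockey_aux (k : ℕ) (d : ℕ) :
    ∑ j ∈ range (d + 1), (j + k).choose k = (d + k + 1).choose (k + 1) := by
  induction d with
  | zero => simp
  | succ d ih =>
    rw [Finset.sum_range_succ, ih]
    have e1 : d + 1 + k = d + k + 1 := by ring
    rw [e1, Nat.choose_succ_succ (d + k + 1) k]
    ring

lemma pair_sum_aux (f : ℕ → ℕ) (M : ℕ) :
    ∑ j ∈ range (2 * M + 2), f j = ∑ c ∈ range (M + 1), (f (2 * c) + f (2 * c + 1)) := by
  induction M with
  | zero => simp [Finset.sum_range_succ]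
  | succ M ih =>
    have h1 : 2 * (M + 1) + 2 = (2 * M + 2) + 1 + 1 := by ring
    rw [h1, Finset.sum_range_succ, Finset.sum_range_succ, ih,
      Finset.sum_range_succ (fun c => f (2 * c) + f (2 * c + 1)) (M + 1)]
    have e3 : 2 * M + 2 + 1 = 2 * M + 3 := by ring
    have e1 : 2 * (M + 1) = 2 * M + 2 := by ring
    have e2 : 2 * (M + 1) + 1 = 2 * M + 3 := by ring
    rw [e3, add_assoc, e2, e1]

/-- For `n ≥ 3` and `2 ≤ q ≤ n - 1`, there exists `D` such that for all odd
`d ≥ D`: `C(d+q, q) - C(d-1, q) - q ≤ N(d) - n - C(d+n-q+1, n-q+1) + C(n+1, n-q+1) + (n-q+1)`,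
where `N(d) = ∑_{c=0}^{(d-1)/2} C(d - 2c + n - 1, n - 1)`. -/
theorem stmt_13 (n q : ℕ) (hn : 3 ≤ n) (hq1 : 2 ≤ q) (hq2 : q ≤ n - 1) :
    ∃ D : ℕ, ∀ d : ℕ, D ≤ d → Odd d →
      ((d + q).choose q : ℤ) - ((d - 1).choose q : ℤ) - (q : ℤ) ≤
        (∑ c ∈ Finset.range ((d - 1) / 2 + 1), ((d - 2 * c + n - 1).choose (n - 1) : ℤ))
          - (n : ℤ) - ((d + n - q + 1).choose (n - q + 1) : ℤ)
          + ((n + 1).choose (n - q + 1) : ℤ) + ((n : ℤ) - q + 1) := by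
  refine ⟨2 * n * n + 4 * n + 5, fun d hd hodd => ?_⟩
  obtain ⟨M, hM⟩ := hodd
  set B := (d + n - 1).choose (n - 1) with hBdef
  -- (A) C(d+q, q) ≤ B
  have hA : (d + q).choose q ≤ B := by
    have h1 : (d + q).choose q = (d + q).choose d := by
      have := Nat.choose_symm (show q ≤ d + q by omega)
      have e : d + q - q = d := by omega
      rw [e] at this; exact this.symm
    have h2 : (d + n - 1).choose d = B := by
      have := Nat.choose_symm (show n - 1 ≤ d + n - 1 by omega)
      have e : d + n - 1 - (n - 1) = d := by omega
      rw [e] at this; exact this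
    rw [h1, ← h2]
    exact Nat.choose_le_choose d (by omega)
  -- (B) C(d+n-q+1, n-q+1) ≤ B
  have hB : (d + n - q + 1).choose (n - q + 1) ≤ B := by
    have h1 : (d + n - q + 1).choose (n - q + 1) = (d + n - q + 1).choose d := by
      have := Nat.choose_symm (show n - q + 1 ≤ d + n - q + 1 by omega)
      have e : d + n - q + 1 - (n - q + 1) = d := by omega
      rw [e] at this; exact this.symm
    have h2 : (d + n - 1).choose d = B := by
      have := Nat.choose_symm (show n - 1 ≤ d + n - 1 by omega)
      have e : d + n - 1 - (n - 1) = d := by omega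
      rw [e] at this; exact this
    rw [h1, ← h2]
    exact Nat.choose_le_choose d (by omega)
  -- N rewritten
  have hNsum : ∑ c ∈ range ((d - 1) / 2 + 1), (d - 2 * c + n - 1).choose (n - 1)
      = ∑ c ∈ range (M + 1), (2 * c + 1 + (n - 1)).choose (n - 1) := by
    have hM' : (d - 1) / 2 = M := by omega
    rw [hM', ← Finset.sum_range_reflect (fun c => (2 * c + 1 + (n - 1)).choose (n - 1)) (M + 1)]
    refine Finset.sum_congr rfl ?_
    intro c hc
    simp only [Finset.mem_range] at hc
    congr 1
    omega
  -- hockey stick + doubling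
  have hdouble : (d + n).choose n ≤ 2 * ∑ c ∈ range (M + 1), (2 * c + 1 + (n - 1)).choose (n - 1) := by
    have hh := hockey_aux (n - 1) d
    have e : d + (n - 1) + 1 = d + n := by omega
    have e2 : (n - 1) + 1 = n := by omega
    rw [e, e2] at hh
    rw [← hh, hM]
    have e3 : 2 * M + 1 + 1 = 2 * M + 2 := by omega
    rw [e3, pair_sum_aux (fun j => (j + (n - 1)).choose (n - 1)) M, Finset.mul_sum]
    refine Finset.sum_le_sum ?_
    intro c _
    have h := Nat.choose_le_choose (n - 1) (show 2 * c + (n - 1) ≤ 2 * c + 1 + (n - 1) by omega)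
    omega
  -- (d+n) * B = C(d+n, n) * n
  have hmul : (d + n) * B = (d + n).choose n * n := by
    have h := Nat.add_one_mul_choose_eq (d + n - 1) (n - 1)
    have e : d + n - 1 + 1 = d + n := by omega
    have e2 : n - 1 + 1 = n := by omega
    rw [e, e2] at h
    exact h
  -- B ≥ 2n
  have hB2n : 2 * n ≤ B := by
    have h := Nat.choose_succ_right_eq (d + n - 1) (n - 2)
    have e : n - 2 + 1 = n - 1 := by omega
    have e2 : d + n - 1 - (n - 2) = d + 1 := by omega
    rw [e, e2] at h
    have hpos : 1 ≤ (d + n - 1).choose (n - 2) := Nat.choose_pos (by omega)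
    have h2 : 2 * n * (n - 1) ≤ B * (n - 1) := by
      rw [h]
      calc 2 * n * (n - 1) ≤ 2 * n * n := Nat.mul_le_mul_left _ (by omega)
        _ ≤ 1 * (d + 1) := by omega
        _ ≤ (d + n - 1).choose (n - 2) * (d + 1) := Nat.mul_le_mul_right _ hpos
    exact Nat.le_of_mul_le_mul_right h2 (by omega)
  -- 5B ≤ C(d+n, n)
  have h5B : 5 * B ≤ (d + n).choose n := by
    have h1 : 5 * B * n ≤ (d + n).choose n * n := by
      calc 5 * B * n = 5 * n * B := by ring
        _ ≤ (d + n) * B := Nat.mul_le_mul_right _ (by omega)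
        _ = (d + n).choose n * n := hmul
    exact Nat.le_of_mul_le_mul_right h1 (by omega)
  -- conclude the ℕ inequality
  have hfinal : (d + q).choose q + (d + n - q + 1).choose (n - q + 1) + n
      ≤ ∑ c ∈ range ((d - 1) / 2 + 1), (d - 2 * c + n - 1).choose (n - 1) := by
    rw [hNsum]
    omega
  have hcast := (Nat.cast_le (α := ℤ)).mpr hfinal
  push_cast at hcast
  have hq_le : (q : ℤ) ≤ (n : ℤ) - 1 := by
    have : q ≤ n - 1 := hq2
    have : (q : ℤ) ≤ ((n - 1 : ℕ) : ℤ) := by exact_mod_cast this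
    omega
  have hpos1 : (0 : ℤ) ≤ ((d - 1).choose q : ℤ) := by positivity
  have hpos2 : (0 : ℤ) ≤ ((n + 1).choose (n - q + 1) : ℤ) := by positivity
  linarith
end

section
/- Let n ≥ 3 and 2 ≤ q ≤ n − 1 be integers. Then there exists D ∈ ℕ such that for every even integer d ≥ D the following holds: setting I = ⟨x_0^d, …, x_{n−1}^d, y^{d/2}⟩ in R, m_1 = x_0^{d−1}⋯x_{q−2}^{d−1}x_{q−1}^{q+1}y^{d/2−1}, and m_2 = x_0^{d−1}⋯x_{q−1}^{d−1}x_q^{q}, the number of monomials of weighted degree d dividing m_2 is at most the number of monomials u of weighted degree d such that u is none of x_0^d, …, x_{n−1}^d, y^{d/2} and u·m_1 ∈ I. -/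
/-!
Trading each `x_q²` of a monomial for a `y` preserves the weighted degree and is injective on
`y`-free monomials, so it suffices that it maps every degree-`d` divisor `u` of `m₂` into `A(m₁)`.
If a `y` was created, `y^{d/2}` divides `u m₁`. Otherwise `u` has `x_q`-exponent at most `1`; then
either some `x_j` with `j < q - 1` occurs in `u`, so `x_j^d ∣ u m₁`, or `u = x_{q-1}^{d-a} x_q^a`
with `a ≤ 1`, so `x_{q-1}^d ∣ u m₁`. Since `u` divides `m₂`, its exponents are below `d` once
`d > q`, which rules out the generators of `I`.
-/

open MvPolynomial

namespace MvPolynomial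

variable {R ι : Type*} [CommSemiring R]

theorem prod_X_pow_eq_monomial_equivFunOnFinite [Fintype ι] (e : ι → ℕ) :
    ∏ i, (X i : MvPolynomial ι R) ^ e i = monomial (Finsupp.equivFunOnFinite.symm e) 1 := by
  classical
  rw [prod_X_pow]
  congr
  ext i
  simp

theorem monomial_one_eq_X_pow_iff [Nontrivial R] {e : ι →₀ ℕ} {i : ι} {m : ℕ} :
    monomial e (1 : R) = X i ^ m ↔ e = Finsupp.single i m := by
  rw [X_pow_eq_monomial, monomial_left_inj one_ne_zero]

theorem monomial_one_mem_span_monomial_image [Nontrivial R] {e : ι →₀ ℕ} {s : Set (ι →₀ ℕ)} :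
    monomial e (1 : R) ∈ Ideal.span ((fun s => monomial s (1 : R)) '' s) ↔ ∃ t ∈ s, t ≤ e := by
  classical
  simp [mem_ideal_span_monomial_image, support_monomial]

variable [Fintype ι]

theorem prod_X_inl_pow_mul_X_inr_pow (c : ι → ℕ) (b : ℕ) :
    (∏ j, (X (Sum.inl j) : MvPolynomial (ι ⊕ Unit) R) ^ c j) * X (Sum.inr ()) ^ b =
      monomial (Finsupp.equivFunOnFinite.symm (Sum.elim c fun _ => b)) 1 := by
  rw [← prod_X_pow_eq_monomial_equivFunOnFinite, Fintype.prod_sum_type]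
  simp

variable [Nontrivial R]

theorem monomial_one_dvd_prod_X_inl_pow_iff {σ : (ι ⊕ Unit) →₀ ℕ} {c : ι → ℕ} :
    monomial σ (1 : R) ∣ ∏ j, (X (Sum.inl j) : MvPolynomial (ι ⊕ Unit) R) ^ c j ↔
      (∀ j, σ (Sum.inl j) ≤ c j) ∧ σ (Sum.inr ()) = 0 := by
  rw [← mul_one (∏ j, _), ← pow_zero (X (Sum.inr ())), prod_X_inl_pow_mul_X_inr_pow,
    monomial_one_dvd_monomial_one, Finsupp.le_def, Sum.forall]
  simp [Unique.forall_iff]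

theorem monomial_one_mul_mem_span_iff {σ : (ι ⊕ Unit) →₀ ℕ} {c : ι → ℕ} {b e d : ℕ} :
    monomial σ (1 : R) *
        ((∏ j, (X (Sum.inl j) : MvPolynomial (ι ⊕ Unit) R) ^ c j) * X (Sum.inr ()) ^ b) ∈
      Ideal.span ({(X (Sum.inr ()) : MvPolynomial (ι ⊕ Unit) R) ^ e} ∪
        Set.range fun j => (X (Sum.inl j) : MvPolynomial (ι ⊕ Unit) R) ^ d) ↔
      e ≤ σ (Sum.inr ()) + b ∨ ∃ j, d ≤ σ (Sum.inl j) + c j := by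
  have hgen : ({(X (Sum.inr ()) : MvPolynomial (ι ⊕ Unit) R) ^ e} ∪
      Set.range fun j => (X (Sum.inl j) : MvPolynomial (ι ⊕ Unit) R) ^ d) =
      (fun s => monomial s (1 : R)) ''
        ({Finsupp.single (Sum.inr ()) e} ∪ Set.range fun j => Finsupp.single (Sum.inl j) d) := by
    rw [Set.image_union, Set.image_singleton, ← Set.range_comp]
    simp [Function.comp_def, X_pow_eq_monomial]
  rw [hgen, prod_X_inl_pow_mul_X_inr_pow, monomial_mul, one_mul,
    monomial_one_mem_span_monomial_image]
  simp [Finsupp.single_le_iff]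

end MvPolynomial

variable {n : ℕ}

theorem apply_le_degw (σ : (Fin n ⊕ Unit) →₀ ℕ) (v : Fin n ⊕ Unit) : σ v ≤ degw n σ := by
  unfold degw
  rcases v with j | ⟨⟨⟩⟩
  · have := Finset.single_le_sum (f := fun i => σ (Sum.inl i)) (fun _ _ => Nat.zero_le _)
      (Finset.mem_univ j)
    omega
  · change σ (Sum.inr ()) ≤ _
    omega

theorem finite_setOf_degw_eq (n d : ℕ) : {σ | degw n σ = d}.Finite :=
  (Set.finite_Iic (Finsupp.equivFunOnFinite.symm fun _ => d)).subset
    fun σ (hσ : degw n σ = d) => Finsupp.le_def.mpr fun v => by simpa [hσ] using apply_le_degw σ v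

noncomputable def xSqToY (Q : Fin n) (σ : (Fin n ⊕ Unit) →₀ ℕ) : (Fin n ⊕ Unit) →₀ ℕ :=
  (σ.update (Sum.inl Q) (σ (Sum.inl Q) % 2)).update (Sum.inr ())
    (σ (Sum.inr ()) + σ (Sum.inl Q) / 2)

section xSqToY

variable (Q : Fin n) (σ : (Fin n ⊕ Unit) →₀ ℕ)

@[simp]
theorem xSqToY_inl_self : xSqToY Q σ (Sum.inl Q) = σ (Sum.inl Q) % 2 := by
  simp [xSqToY, Finsupp.update_apply]

@[simp]
theorem xSqToY_inl_of_ne {j : Fin n} (hj : j ≠ Q) : xSqToY Q σ (Sum.inl j) = σ (Sum.inl j) := by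
  simp [xSqToY, Finsupp.update_apply, hj]

@[simp]
theorem xSqToY_inr (u : Unit) : xSqToY Q σ (Sum.inr u) = σ (Sum.inr ()) + σ (Sum.inl Q) / 2 := by
  simp [xSqToY, Finsupp.update_apply]

theorem xSqToY_inl_le (j : Fin n) : xSqToY Q σ (Sum.inl j) ≤ σ (Sum.inl j) := by
  obtain rfl | hj := eq_or_ne j Q
  · simpa using Nat.mod_le _ _
  · simp [hj]

theorem xSqToY_of_le_one (h : σ (Sum.inl Q) ≤ 1) : xSqToY Q σ = σ := by
  ext (j | ⟨⟩)
  · obtain rfl | hj := eq_or_ne j Q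
    · simpa using Nat.mod_eq_of_lt (Nat.lt_succ_of_le h)
    · simp [hj]
  · simp [Nat.div_eq_of_lt (Nat.lt_succ_of_le h)]

theorem degw_xSqToY : degw n (xSqToY Q σ) = degw n σ := by
  have hrest : ∑ j ∈ {Q}ᶜ, xSqToY Q σ (Sum.inl j) = ∑ j ∈ {Q}ᶜ, σ (Sum.inl j) :=
    Finset.sum_congr rfl fun j hj => xSqToY_inl_of_ne Q σ (by simpa using hj)
  unfold degw
  rw [Fintype.sum_eq_add_sum_compl Q, Fintype.sum_eq_add_sum_compl Q, hrest, xSqToY_inl_self,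
    xSqToY_inr]
  have := Nat.mod_add_div (σ (Sum.inl Q)) 2
  omega

theorem injOn_xSqToY : Set.InjOn (xSqToY Q) {σ | σ (Sum.inr ()) = 0} := by
  intro σ hσ σ' hσ' h
  have hy := DFunLike.congr_fun h (Sum.inr ())
  have hQ := DFunLike.congr_fun h (Sum.inl Q)
  simp only [xSqToY_inr, xSqToY_inl_self, Set.mem_ofPred_eq] at hy hQ hσ hσ'
  ext (j | ⟨⟩)
  · obtain rfl | hj := eq_or_ne j Q
    · omega
    · simpa [hj] using DFunLike.congr_fun h (Sum.inl j)
  · rw [hσ, hσ']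

end xSqToY

/-- Exponent of `x_j` in `m₂ = x_0^{d-1} ⋯ x_{q-1}^{d-1} x_q^q`. -/
def m₂Exp (q d j : ℕ) : ℕ := if j < q then d - 1 else if j = q then q else 0

/-- Exponent of `x_j` in `m₁ = x_0^{d-1} ⋯ x_{q-2}^{d-1} x_{q-1}^{q+1} y^{d/2-1}`. -/
def m₁Exp (q d j : ℕ) : ℕ := if j < q - 1 then d - 1 else if j = q - 1 then q + 1 else 0

/-- The paper's `D(m)` for `m = ∏ j, x_j ^ c j`, as a set of exponent vectors. -/
def degreeDivisors (n d : ℕ) (c : Fin n → ℕ) : Set ((Fin n ⊕ Unit) →₀ ℕ) :=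
  {σ | degw n σ = d ∧ (∀ j, σ (Sum.inl j) ≤ c j) ∧ σ (Sum.inr ()) = 0}

/-- The paper's `A(m)` for `m = (∏ j, x_j ^ c j) * y ^ b` and `I = ⟨x_0^d, …, x_{n-1}^d, y^{d/2}⟩`,
as a set of exponent vectors. -/
def colonMonomials (n d : ℕ) (c : Fin n → ℕ) (b : ℕ) : Set ((Fin n ⊕ Unit) →₀ ℕ) :=
  {σ | degw n σ = d ∧ (∀ j, σ ≠ Finsupp.single (Sum.inl j) d) ∧
    σ ≠ Finsupp.single (Sum.inr ()) (d / 2) ∧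
    (d / 2 ≤ σ (Sum.inr ()) + b ∨ ∃ j, d ≤ σ (Sum.inl j) + c j)}

section Injection

variable {d : ℕ} {Q : Fin n} {σ : (Fin n ⊕ Unit) →₀ ℕ}

theorem m₂Exp_lt {q : ℕ} (hqd : q < d) (j : ℕ) : m₂Exp q d j < d := by
  unfold m₂Exp
  split_ifs <;> omega

theorem exists_le_add_m₁Exp (hQ₀ : 1 ≤ (Q : ℕ)) (hdeg : degw n σ = d)
    (hle : ∀ j : Fin n, σ (Sum.inl j) ≤ m₂Exp Q d j) (hy : σ (Sum.inr ()) = 0)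
    (hQ : σ (Sum.inl Q) ≤ 1) : ∃ j : Fin n, d ≤ σ (Sum.inl j) + m₁Exp Q d j := by
  by_contra! h
  obtain ⟨P, hP⟩ : ∃ P : Fin n, (P : ℕ) = Q - 1 := ⟨⟨Q - 1, by omega⟩, rfl⟩
  have hPQ : P ≠ Q := fun e => by rw [e] at hP; omega
  have hzero : ∀ j, j ≠ P ∧ j ≠ Q → σ (Sum.inl j) = 0 := by
    rintro j ⟨hjP, hjQ⟩
    have hjP : (j : ℕ) ≠ Q - 1 := fun e => hjP (Fin.ext (e.trans hP.symm))
    have hjQ : (j : ℕ) ≠ Q := fun e => hjQ (Fin.ext e)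
    have h₁ := h j
    have h₂ := hle j
    unfold m₁Exp at h₁
    unfold m₂Exp at h₂
    split_ifs at h₁ h₂ <;> omega
  have hsum : σ (Sum.inl P) + σ (Sum.inl Q) = d := by
    rw [← Fintype.sum_eq_add P Q hPQ hzero, ← hdeg, degw, hy, mul_zero, add_zero]
  have hmP := h P
  simp only [m₁Exp, hP, lt_irrefl, if_false, if_true] at hmP
  omega

theorem mapsTo_xSqToY (hQ₀ : 1 ≤ (Q : ℕ)) (hQd : (Q : ℕ) < d) :
    Set.MapsTo (xSqToY Q) (degreeDivisors n d fun j => m₂Exp Q d j)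
      (colonMonomials n d (fun j => m₁Exp Q d j) (d / 2 - 1)) := by
  rintro σ ⟨hdeg, hle, hy⟩
  beta_reduce at hle
  refine ⟨(degw_xSqToY Q σ).trans hdeg, fun j hj => ?_, fun hτ => ?_, ?_⟩
  · have hτj : xSqToY Q σ (Sum.inl j) = d := by simp [hj]
    have := xSqToY_inl_le Q σ j
    have := hle j
    have := m₂Exp_lt hQd j
    omega
  · have hzero : ∀ j, j ≠ Q → σ (Sum.inl j) = 0 := fun j hj => by
      simpa [hj] using DFunLike.congr_fun hτ (Sum.inl j)
    have hsum := Fintype.sum_eq_single Q hzero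
    have := hle Q
    have := m₂Exp_lt hQd Q
    simp only [degw, hy, mul_zero, add_zero] at hdeg
    omega
  · by_cases hQ : σ (Sum.inl Q) ≤ 1
    · rw [xSqToY_of_le_one Q σ hQ]
      exact Or.inr (exists_le_add_m₁Exp hQ₀ hdeg hle hy hQ)
    · left
      rw [xSqToY_inr]
      omega

end Injection

theorem ncard_degreeDivisors_le_ncard_colonMonomials {d : ℕ} (Q : Fin n) (hQ₀ : 1 ≤ (Q : ℕ))
    (hQd : (Q : ℕ) < d) :
    (degreeDivisors n d fun j => m₂Exp Q d j).ncard ≤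
      (colonMonomials n d (fun j => m₁Exp Q d j) (d / 2 - 1)).ncard :=
  Set.ncard_le_ncard_of_injOn (xSqToY Q) (mapsTo_xSqToY hQ₀ hQd)
    ((injOn_xSqToY Q).mono fun _ hσ => hσ.2.2)
    ((finite_setOf_degw_eq n d).subset fun _ hσ => hσ.1)

theorem stmt_14_general (k : Type*) [Field k] (n q : ℕ) (hq1 : 2 ≤ q) (hq2 : q ≤ n - 1) :
    ∃ D : ℕ, ∀ d : ℕ, D ≤ d → Even d →
      Set.ncard {σ : (Fin n ⊕ Unit) →₀ ℕ | degw n σ = d ∧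
          monomial σ (1 : k) ∣
            ∏ j : Fin n, X (Sum.inl j) ^
              (if (j : ℕ) < q then d - 1 else if (j : ℕ) = q then q else 0)} ≤
      Set.ncard {σ : (Fin n ⊕ Unit) →₀ ℕ | degw n σ = d ∧
          (∀ j : Fin n,
            monomial σ (1 : k) ≠ (X (Sum.inl j) : MvPolynomial (Fin n ⊕ Unit) k) ^ d) ∧
          monomial σ (1 : k) ≠ (X (Sum.inr ()) : MvPolynomial (Fin n ⊕ Unit) k) ^ (d / 2) ∧
          monomial σ (1 : k) *
              ((∏ j : Fin n, X (Sum.inl j) ^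
                  (if (j : ℕ) < q - 1 then d - 1 else if (j : ℕ) = q - 1 then q + 1 else 0)) *
                X (Sum.inr ()) ^ (d / 2 - 1)) ∈
            Ideal.span ({(X (Sum.inr ()) : MvPolynomial (Fin n ⊕ Unit) k) ^ (d / 2)} ∪
              Set.range fun j : Fin n =>
                (X (Sum.inl j) : MvPolynomial (Fin n ⊕ Unit) k) ^ d)} := by
  refine ⟨q + 1, fun d hd _ => ?_⟩
  simp only [monomial_one_dvd_prod_X_inl_pow_iff, monomial_one_mul_mem_span_iff, ne_eq,
    monomial_one_eq_X_pow_iff]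
  exact ncard_degreeDivisors_le_ncard_colonMonomials ⟨q, by omega⟩ (by omega : 1 ≤ q) hd

/-- Let `n ≥ 3` and `2 ≤ q ≤ n - 1`. Then there is `D` such that for every
even `d ≥ D`, with `I = ⟨x_0^d, …, x_{n-1}^d, y^{d/2}⟩`,
`m₁ = x_0^{d-1} ⋯ x_{q-2}^{d-1} x_{q-1}^{q+1} y^{d/2-1}` and
`m₂ = x_0^{d-1} ⋯ x_{q-1}^{d-1} x_q^{q}` in `R = k[x_0, …, x_{n-1}, y]`
(with `deg x_j = 1`, `deg y = 2`): the number of monomials of weighted degree `d` dividing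
`m₂` is at most the number of monomials `u` of weighted degree `d` which are none of
`x_0^d, …, x_{n-1}^d, y^{d/2}` and satisfy `u * m₁ ∈ I`. -/
theorem stmt_14 (k : Type*) [Field k] (n q : ℕ) (hn : 3 ≤ n) (hq1 : 2 ≤ q) (hq2 : q ≤ n - 1) :
    ∃ D : ℕ, ∀ d : ℕ, D ≤ d → Even d →
      Set.ncard {σ : (Fin n ⊕ Unit) →₀ ℕ | degw n σ = d ∧
          monomial σ (1 : k) ∣
            ∏ j : Fin n, X (Sum.inl j) ^
              (if (j : ℕ) < q then d - 1 else if (j : ℕ) = q then q else 0)} ≤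
      Set.ncard {σ : (Fin n ⊕ Unit) →₀ ℕ | degw n σ = d ∧
          (∀ j : Fin n,
            monomial σ (1 : k) ≠ (X (Sum.inl j) : MvPolynomial (Fin n ⊕ Unit) k) ^ d) ∧
          monomial σ (1 : k) ≠ (X (Sum.inr ()) : MvPolynomial (Fin n ⊕ Unit) k) ^ (d / 2) ∧
          monomial σ (1 : k) *
              ((∏ j : Fin n, X (Sum.inl j) ^
                  (if (j : ℕ) < q - 1 then d - 1 else if (j : ℕ) = q - 1 then q + 1 else 0)) *
                X (Sum.inr ()) ^ (d / 2 - 1)) ∈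
            Ideal.span ({(X (Sum.inr ()) : MvPolynomial (Fin n ⊕ Unit) k) ^ (d / 2)} ∪
              Set.range fun j : Fin n =>
                (X (Sum.inl j) : MvPolynomial (Fin n ⊕ Unit) k) ^ d)} :=
  stmt_14_general k n q hq1 hq2
end

section
/- For every integer q ≥ 2 there exist a polynomial p with rational coefficients of degree exactly q − 1 and D ∈ ℕ such that for all even integers d ≥ D: ∑_{c=0}^{d/2} C(d − 2c + q − 1, q − 1) − ∑_{c=0}^{⌊(d−q−2)/2⌋} C(d − 2c − 3, q − 1) − q = p(d). -/
open Finset Polynomial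

namespace Stmt18

lemma hockey (k a : ℕ) : ∀ L : ℕ,
    a.choose (k+1) + ∑ i ∈ Finset.range L, (a+i).choose k = (a+L).choose (k+1)
  | 0 => by simp
  | (L+1) => by
      rw [Finset.sum_range_succ, ← add_assoc, hockey k a L,
        show a + (L+1) = (a+L) + 1 from rfl, Nat.choose_succ_succ']
      omega

lemma double (f : ℕ → ℕ) : ∀ n : ℕ,
    ∑ i ∈ Finset.range (2*n), f i = ∑ c ∈ Finset.range n, (f (2*c) + f (2*c+1))
  | 0 => by simp
  | (n+1) => by
      rw [Finset.sum_range_succ, show 2*(n+1) = (2*n+1)+1 from rfl, Finset.sum_range_succ,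
        Finset.sum_range_succ, double f n]
      ring

lemma prod_choose : ∀ (k N : ℕ), k ≤ N →
    ∏ i ∈ Finset.range k, ((N:ℚ) - i) = k.factorial * N.choose k
  | 0, N, _ => by simp
  | (k+1), N, h => by
      rw [Finset.prod_range_succ, prod_choose k N (by omega)]
      have h1 := Nat.choose_succ_right_eq N k
      have h2 : ((N - k : ℕ) : ℚ) = (N:ℚ) - k := by
        have : k ≤ N := by omega
        push_cast [this]; ring
      have h3 : ((N.choose (k+1) * (k+1) : ℕ) : ℚ) = ((N.choose k * (N - k) : ℕ) : ℚ) := by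
        rw [h1]
      push_cast [h2] at h3
      rw [Nat.factorial_succ]
      push_cast
      linear_combination -(k.factorial : ℚ) * h3

noncomputable def bp (k : ℕ) (z : ℤ) : Polynomial ℚ :=
  Polynomial.C ((k.factorial : ℚ)⁻¹) * ∏ i ∈ Finset.range k, (Polynomial.X + Polynomial.C ((z : ℚ) - i))

lemma bp_natDegree_le (k : ℕ) (z : ℤ) : (bp k z).natDegree ≤ k := by
  unfold bp
  refine le_trans (Polynomial.natDegree_mul_le) ?_
  simp only [Polynomial.natDegree_C, zero_add]
  refine le_trans (Polynomial.natDegree_prod_le _ _) ?_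
  simp only [Polynomial.natDegree_X_add_C, Finset.sum_const, Finset.card_range, smul_eq_mul,
    mul_one, le_refl]

lemma bp_coeff (k : ℕ) (z : ℤ) : (bp k z).coeff k = (k.factorial : ℚ)⁻¹ := by
  unfold bp
  rw [Polynomial.coeff_C_mul]
  have hm : Polynomial.Monic (∏ i ∈ Finset.range k, (Polynomial.X + Polynomial.C ((z : ℚ) - i))) :=
    Polynomial.monic_prod_of_monic _ _ (fun i _ => Polynomial.monic_X_add_C _)
  have hd : (∏ i ∈ Finset.range k, (Polynomial.X + Polynomial.C ((z : ℚ) - i))).natDegree = k := by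
    rw [Polynomial.natDegree_prod]
    · simp only [Polynomial.natDegree_X_add_C, Finset.sum_const, Finset.card_range, smul_eq_mul,
        mul_one]
    · intro i _; exact (Polynomial.monic_X_add_C _).ne_zero
  have := hm.coeff_natDegree
  rw [hd] at this
  rw [this, mul_one]

lemma bp_eval (k : ℕ) (z : ℤ) (x : ℚ) :
    (bp k z).eval x = (k.factorial : ℚ)⁻¹ * ∏ i ∈ Finset.range k, (x + ((z:ℚ) - i)) := by
  simp [bp, Polynomial.eval_prod]

lemma bp_eval_choose (k : ℕ) (z : ℤ) (d N : ℕ) (hN : (N:ℤ) = (d:ℤ) + z) (hk : k ≤ N) :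
    (bp k z).eval (d:ℚ) = N.choose k := by
  rw [bp_eval]
  have hcong : ∀ i ∈ Finset.range k, ((d:ℚ) + ((z:ℚ) - i)) = (N:ℚ) - i := by
    intro i _
    have : ((N:ℤ):ℚ) = ((d:ℤ):ℚ) + ((z:ℤ):ℚ) := by exact_mod_cast congrArg (fun t : ℤ => (t:ℚ)) hN
    push_cast at this ⊢
    linarith
  rw [Finset.prod_congr rfl hcong, prod_choose k N hk]
  have : (k.factorial : ℚ) ≠ 0 := by exact_mod_cast k.factorial_ne_zero
  field_simp


lemma chain_step (q d r : ℕ) (hq : 3 ≤ q) (hqo : q % 2 = 1) (hr : r + 1 ≤ q - 2) (hd : d % 2 = 0)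
    (hdq : q + 3 ≤ d) :
    1 + 2 * ∑ c ∈ Finset.range ((d - q - 3)/2 + 1), (d - 2*c - (q - r)).choose (r+1)
      = (d + r + 1 - q).choose (r+2)
        + ∑ c ∈ Finset.range ((d - q - 3)/2 + 1), (d - 2*c - (q + 1 - r)).choose r := by
  set K := (d - q - 3)/2 with hK
  have h2K : 2*K = d - q - 3 := by omega
  -- split one copy via Pascal
  have split : ∑ c ∈ Finset.range (K + 1), (d - 2*c - (q - r)).choose (r+1)
      = (∑ c ∈ Finset.range (K + 1), (d - 2*c - (q + 1 - r)).choose r)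
        + ∑ c ∈ Finset.range (K + 1), (d - 2*c - (q + 1 - r)).choose (r+1) := by
    rw [← Finset.sum_add_distrib]
    refine Finset.sum_congr rfl (fun c hc => ?_)
    have hc' : c ≤ K := by simpa using Nat.lt_succ_iff.mp (Finset.mem_range.mp hc)
    have h1 : d - 2*c - (q - r) = (d - 2*c - (q + 1 - r)) + 1 := by omega
    rw [h1, Nat.choose_succ_succ']
  -- pairing
  have pair : (∑ c ∈ Finset.range (K + 1), (d - 2*c - (q - r)).choose (r+1))
      + ∑ c ∈ Finset.range (K + 1), (d - 2*c - (q + 1 - r)).choose (r+1)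
      = ∑ i ∈ Finset.range (2*(K+1)), (d - (q - r) - i).choose (r+1) := by
    rw [double (fun i => (d - (q - r) - i).choose (r+1)) (K+1), ← Finset.sum_add_distrib]
    refine Finset.sum_congr rfl (fun c hc => ?_)
    have hc' : c ≤ K := by simpa using Nat.lt_succ_iff.mp (Finset.mem_range.mp hc)
    have e1 : d - (q - r) - 2*c = d - 2*c - (q - r) := by omega
    have e2 : d - (q - r) - (2*c+1) = d - 2*c - (q + 1 - r) := by omega
    rw [e1, e2]
  have reflect : ∑ i ∈ Finset.range (2*(K+1)), (d - (q - r) - i).choose (r+1)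
      = ∑ i ∈ Finset.range (2*(K+1)), ((r+2) + i).choose (r+1) := by
    rw [← Finset.sum_range_reflect (fun i => (d - (q - r) - i).choose (r+1)) (2*(K+1))]
    refine Finset.sum_congr rfl (fun i hi => ?_)
    have hi' : i < 2*(K+1) := Finset.mem_range.mp hi
    have : d - (q - r) - (2*(K+1) - 1 - i) = (r+2) + i := by omega
    rw [this]
  have hs := hockey (r+1) (r+2) (2*(K+1))
  have hch : (r+2).choose (r+2) = 1 := Nat.choose_self _
  have hend : (r+2) + 2*(K+1) = d + r + 1 - q := by omega
  simp only [show r+1+1 = r+2 from rfl] at hs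
  rw [hend, hch] at hs
  omega


lemma chain (q : ℕ) (hq : 3 ≤ q) (hqo : q % 2 = 1) :
    ∀ r : ℕ, r ≤ q - 2 → ∃ τ : Polynomial ℚ, τ.natDegree ≤ r + 1 ∧
      τ.coeff (r+1) = ((r+1).factorial : ℚ)⁻¹ / 2 ∧
      ∀ d : ℕ, d % 2 = 0 → q + 3 ≤ d →
        ∑ c ∈ Finset.range ((d - q - 3)/2 + 1), ((d - 2*c - (q + 1 - r)).choose r : ℚ)
          = τ.eval (d : ℚ)
  | 0, _ => by
    refine ⟨Polynomial.C (2⁻¹ : ℚ) * Polynomial.X - Polynomial.C (((q:ℚ)+1)/2), ?_, ?_, ?_⟩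
    · refine le_trans (Polynomial.natDegree_sub_le _ _) ?_
      simp only [Polynomial.natDegree_C, Polynomial.natDegree_X]
      refine max_le (le_trans (Polynomial.natDegree_mul_le) ?_) (by simp)
      simp [Polynomial.natDegree_C, Polynomial.natDegree_X]
    · simp [Polynomial.coeff_sub, Polynomial.coeff_C_mul, Polynomial.coeff_X_one,
        Polynomial.coeff_C]
    · intro d hd hdq
      have hK1 : 2*((d - q - 3)/2 + 1) + q + 1 = d := by omega
      simp only [Nat.choose_zero_right, Nat.cast_one, Finset.sum_const, Finset.card_range,
        nsmul_eq_mul, mul_one]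
      have hcast : ((2*((d - q - 3)/2 + 1) + q + 1 : ℕ) : ℚ) = (d : ℚ) := by
        exact_mod_cast congrArg (Nat.cast : ℕ → ℚ) hK1
      push_cast at hcast
      simp only [Polynomial.eval_sub, Polynomial.eval_mul, Polynomial.eval_C, Polynomial.eval_X]
      push_cast
      linarith
  | (r+1), hr => by
    obtain ⟨τ, hdeg, hcoeff, heval⟩ := chain q hq hqo r (by omega)
    refine ⟨Polynomial.C (2⁻¹ : ℚ) * (bp (r+2) ((r:ℤ)+1-(q:ℤ)) - 1 + τ), ?_, ?_, ?_⟩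
    · refine le_trans (Polynomial.natDegree_C_mul_le _ _) ?_
      refine le_trans (Polynomial.natDegree_add_le _ _) ?_
      refine max_le (le_trans (Polynomial.natDegree_sub_le _ _) ?_) (by omega)
      exact max_le (by simpa using bp_natDegree_le (r+2) _) (by simp)
    · rw [Polynomial.coeff_C_mul, Polynomial.coeff_add, Polynomial.coeff_sub]
      have h1 : (1 : Polynomial ℚ).coeff (r+1+1) = 0 := by
        simp [Polynomial.coeff_one]
      have h2 : τ.coeff (r+1+1) = 0 :=
        Polynomial.coeff_eq_zero_of_natDegree_lt (by omega)
      rw [h1, h2, show r+1+1 = r+2 from rfl, bp_coeff]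
      ring
    · intro d hd hdq
      have hstep := chain_step q d r hq hqo hr hd hdq
      have hcast := congrArg (Nat.cast : ℕ → ℚ) hstep
      push_cast at hcast
      have hN : ((d + r + 1 - q : ℕ) : ℤ) = (d:ℤ) + ((r:ℤ)+1-(q:ℤ)) := by
        have : q ≤ d + r + 1 := by omega
        push_cast [this]; ring
      have hbp := bp_eval_choose (r+2) ((r:ℤ)+1-(q:ℤ)) d (d + r + 1 - q) hN (by omega)
      have hev := heval d hd hdq
      have hsum : ∑ c ∈ Finset.range ((d - q - 3)/2 + 1),
            ((d - 2*c - (q + 1 - (r+1))).choose (r+1) : ℚ)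
          = ∑ c ∈ Finset.range ((d - q - 3)/2 + 1), ((d - 2*c - (q - r)).choose (r+1) : ℚ) := by
        refine Finset.sum_congr rfl (fun c hc => ?_)
        have : q + 1 - (r+1) = q - r := by omega
        rw [this]
      rw [hsum]
      simp only [Polynomial.eval_mul, Polynomial.eval_C, Polynomial.eval_add,
        Polynomial.eval_sub, Polynomial.eval_one, hbp]
      rw [← hev]
      linarith

end Stmt18

/-- For every `q ≥ 2` there exist a rational polynomial `p` of degree exactly
`q - 1` and `D : ℕ` such that for all even `d ≥ D`:
`∑_{c=0}^{d/2} C(d - 2c + q - 1, q - 1) - ∑_{c=0}^{⌊(d-q-2)/2⌋} C(d - 2c - 3, q - 1) - q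
  = p(d)`. -/
theorem stmt_18 (q : ℕ) (hq : 2 ≤ q) :
    ∃ p : Polynomial ℚ, p.degree = ((q - 1 : ℕ) : WithBot ℕ) ∧
      ∃ D : ℕ, ∀ d : ℕ, D ≤ d → Even d →
        (∑ c ∈ Finset.range (d / 2 + 1), ((d - 2 * c + q - 1).choose (q - 1) : ℚ))
          - (∑ c ∈ Finset.range ((d - q - 2) / 2 + 1), ((d - 2 * c - 3).choose (q - 1) : ℚ))
          - (q : ℚ) = p.eval (d : ℚ) := by
  by_cases hqe : q % 2 = 0
  · -- q even
    refine ⟨(∑ c ∈ Finset.range (q/2+1), Stmt18.bp (q-1) ((q:ℤ)-1-2*c)) - Polynomial.C (q:ℚ),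
      ?_, 2*q+10, ?_⟩
    · -- degree
      have hcoeff : ((∑ c ∈ Finset.range (q/2+1), Stmt18.bp (q-1) ((q:ℤ)-1-2*c))
            - Polynomial.C (q:ℚ)).coeff (q-1) = ((q/2+1 : ℕ) : ℚ) * ((q-1).factorial : ℚ)⁻¹ := by
        rw [Polynomial.coeff_sub, Polynomial.finset_sum_coeff]
        rw [Polynomial.coeff_C, if_neg (by omega)]
        simp [Stmt18.bp_coeff]
      have hne : ((∑ c ∈ Finset.range (q/2+1), Stmt18.bp (q-1) ((q:ℤ)-1-2*c))
            - Polynomial.C (q:ℚ)).coeff (q-1) ≠ 0 := by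
        rw [hcoeff]
        have h1 : (0:ℚ) < (q/2+1 : ℕ) := by positivity
        have h2 : (0:ℚ) < ((q-1).factorial : ℚ) := by
          exact_mod_cast (q-1).factorial_pos
        positivity
      have hub : ((∑ c ∈ Finset.range (q/2+1), Stmt18.bp (q-1) ((q:ℤ)-1-2*c))
            - Polynomial.C (q:ℚ)).natDegree ≤ q-1 := by
        refine le_trans (Polynomial.natDegree_sub_le _ _) (max_le ?_ (by simp))
        exact Polynomial.natDegree_sum_le_of_forall_le _ _
          (fun c _ => Stmt18.bp_natDegree_le _ _)
      exact le_antisymm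
        (le_trans (Polynomial.degree_le_natDegree) (by exact_mod_cast hub))
        (Polynomial.le_degree_of_ne_zero hne)
    · intro d hD hev
      have hd2 : d % 2 = 0 := Nat.even_iff.mp hev
      have hsplit : d/2 + 1 = (q/2+1) + ((d - q - 2)/2 + 1) := by omega
      rw [hsplit, Finset.sum_range_add]
      have htail : ∀ c ∈ Finset.range ((d - q - 2)/2 + 1),
          ((d - 2 * ((q/2+1) + c) + q - 1).choose (q-1) : ℚ)
            = ((d - 2*c - 3).choose (q-1) : ℚ) := by
        intro c hc
        have hc' : c < (d - q - 2)/2 + 1 := Finset.mem_range.mp hc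
        have : d - 2 * ((q/2+1) + c) + q - 1 = d - 2*c - 3 := by omega
        rw [this]
      have hhead : ∀ c ∈ Finset.range (q/2+1),
          ((d - 2 * c + q - 1).choose (q-1) : ℚ)
            = (Stmt18.bp (q-1) ((q:ℤ)-1-2*c)).eval (d:ℚ) := by
        intro c hc
        have hc' : c < q/2+1 := Finset.mem_range.mp hc
        exact (Stmt18.bp_eval_choose (q-1) ((q:ℤ)-1-2*c) d (d - 2*c + q - 1)
          (by omega) (by omega)).symm
      rw [Finset.sum_congr rfl htail, Finset.sum_congr rfl hhead,
        Polynomial.eval_sub, Polynomial.eval_C, Polynomial.eval_finset_sum]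
      ring
  · -- q odd
    have hqo : q % 2 = 1 := by omega
    have hq3 : 3 ≤ q := by omega
    obtain ⟨τ, hτdeg, hτcoeff, hτeval⟩ := Stmt18.chain q hq3 hqo (q-2) le_rfl
    refine ⟨(∑ c ∈ Finset.range ((q-1)/2+1), Stmt18.bp (q-1) ((q:ℤ)-1-2*c))
        + Polynomial.C 1 + τ - Polynomial.C (q:ℚ), ?_, 2*q+10, ?_⟩
    · -- degree
      have hτc : τ.coeff (q-1) = ((q-1).factorial : ℚ)⁻¹ / 2 := by
        have h1 : q - 2 + 1 = q - 1 := by omega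
        rw [← h1]; rw [h1] at hτcoeff; rw [← h1] at hτcoeff; exact hτcoeff
      have hcoeff : ((∑ c ∈ Finset.range ((q-1)/2+1), Stmt18.bp (q-1) ((q:ℤ)-1-2*c))
            + Polynomial.C 1 + τ - Polynomial.C (q:ℚ)).coeff (q-1)
          = (((q-1)/2+1 : ℕ) : ℚ) * ((q-1).factorial : ℚ)⁻¹ + ((q-1).factorial : ℚ)⁻¹ / 2 := by
        rw [Polynomial.coeff_sub, Polynomial.coeff_add, Polynomial.coeff_add,
          Polynomial.finset_sum_coeff, Polynomial.coeff_C, if_neg (by omega),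
          Polynomial.coeff_C, if_neg (by omega), hτc]
        simp [Stmt18.bp_coeff]
      have hne : ((∑ c ∈ Finset.range ((q-1)/2+1), Stmt18.bp (q-1) ((q:ℤ)-1-2*c))
            + Polynomial.C 1 + τ - Polynomial.C (q:ℚ)).coeff (q-1) ≠ 0 := by
        rw [hcoeff]
        have h1 : (0:ℚ) < ((q-1)/2+1 : ℕ) := by positivity
        have h2 : (0:ℚ) < ((q-1).factorial : ℚ) := by
          exact_mod_cast (q-1).factorial_pos
        positivity
      have hub : ((∑ c ∈ Finset.range ((q-1)/2+1), Stmt18.bp (q-1) ((q:ℤ)-1-2*c))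
            + Polynomial.C 1 + τ - Polynomial.C (q:ℚ)).natDegree ≤ q-1 := by
        refine le_trans (Polynomial.natDegree_sub_le _ _) (max_le ?_ (by simp))
        refine le_trans (Polynomial.natDegree_add_le _ _) (max_le ?_ ?_)
        · refine le_trans (Polynomial.natDegree_add_le _ _) (max_le ?_ (by simp))
          exact Polynomial.natDegree_sum_le_of_forall_le _ _
            (fun c _ => Stmt18.bp_natDegree_le _ _)
        · refine le_trans hτdeg (by omega)
      exact le_antisymm
        (le_trans (Polynomial.degree_le_natDegree) (by exact_mod_cast hub))
        (Polynomial.le_degree_of_ne_zero hne)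
    · intro d hD hev
      have hd2 : d % 2 = 0 := Nat.even_iff.mp hev
      have hsplit : d/2 + 1 = ((q-1)/2+1) + (((d - q - 3)/2 + 1) + 1) := by omega
      rw [hsplit, Finset.sum_range_add,
        Finset.sum_range_succ
          (fun c => ((d - 2 * ((q-1)/2+1 + c) + q - 1).choose (q-1) : ℚ)) ((d - q - 3)/2 + 1)]
      have hlast : ((d - 2 * ((q-1)/2+1 + ((d - q - 3)/2 + 1)) + q - 1).choose (q-1) : ℚ)
          = 1 := by
        have : d - 2 * ((q-1)/2+1 + ((d - q - 3)/2 + 1)) + q - 1 = q - 1 := by omega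
        rw [this, Nat.choose_self, Nat.cast_one]
      have htail : ∀ c ∈ Finset.range ((d - q - 3)/2 + 1),
          ((d - 2 * ((q-1)/2+1 + c) + q - 1).choose (q-1) : ℚ)
            = ((d - 2*c - 3).choose (q-2) : ℚ) + ((d - 2*c - 3).choose (q-1) : ℚ) := by
        intro c hc
        have hc' : c < (d - q - 3)/2 + 1 := Finset.mem_range.mp hc
        have e1 : d - 2 * ((q-1)/2+1 + c) + q - 1 = (d - 2*c - 3) + 1 := by omega
        have e2 : q - 1 = (q-2) + 1 := by omega
        rw [e1, e2, Nat.choose_succ_succ', ← e2]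
        push_cast
        ring
      rw [Finset.sum_congr rfl htail, Finset.sum_add_distrib]
      have hchainsum : ∑ c ∈ Finset.range ((d - q - 3)/2 + 1), ((d - 2*c - 3).choose (q-2) : ℚ)
          = τ.eval (d:ℚ) := by
        rw [← hτeval d hd2 (by omega)]
        refine Finset.sum_congr rfl (fun c hc => ?_)
        have : q + 1 - (q-2) = 3 := by omega
        rw [this]
      have hsum2 : ∑ c ∈ Finset.range ((d - q - 3)/2 + 1), ((d - 2*c - 3).choose (q-1) : ℚ)
          = ∑ c ∈ Finset.range ((d - q - 2)/2 + 1), ((d - 2 * c - 3).choose (q - 1) : ℚ) := by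
        have : (d - q - 3)/2 = (d - q - 2)/2 := by omega
        rw [this]
      have hhead : ∀ c ∈ Finset.range ((q-1)/2+1),
          ((d - 2 * c + q - 1).choose (q-1) : ℚ)
            = (Stmt18.bp (q-1) ((q:ℤ)-1-2*c)).eval (d:ℚ) := by
        intro c hc
        have hc' : c < (q-1)/2+1 := Finset.mem_range.mp hc
        exact (Stmt18.bp_eval_choose (q-1) ((q:ℤ)-1-2*c) d (d - 2*c + q - 1)
          (by omega) (by omega)).symm
      rw [hchainsum, hsum2, hlast, Finset.sum_congr rfl hhead,
        Polynomial.eval_sub, Polynomial.eval_add, Polynomial.eval_add,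
        Polynomial.eval_C, Polynomial.eval_C, Polynomial.eval_finset_sum]
      ring
end
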